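/- arXiv:2507.14473 — 7 statements merged into one kernel-verified Lean document; each statement's English description precedes it below -/
import Mathlib

section
/- For every positive integer r and every integer c with binom(r,2) - floor((r-2)/2) ≤ c ≤ binom(r,2) - 1, there does not exist a finite simple graph that is r-regular and in which the neighborhood of every vertex induces exactly c edges. -/
/-- A simple graph is `(r, c)`-triangle-regular if every vertex has degree `r`
and the open neighborhood of every vertex induces exactly `c` edges
(equivalently, `2 * c` ordered pairs of adjacent common neighbors). -/
def IsTriangleRegular {V : Type*} (G : SimpleGraph V) (r c : ℕ) : Prop :=
  (∀ v, Nat.card {u // G.Adj v u} = r) ∧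
  (∀ v, Nat.card {p : V × V // G.Adj v p.1 ∧ G.Adj v p.2 ∧ G.Adj p.1 p.2} = 2 * c)

private lemma card_filter_prod_left' {α β : Type*} (s : Finset α) (t : Finset β) (Q : α → β → Prop)
    [∀ a b, Decidable (Q a b)] :
    ((s ×ˢ t).filter (fun p => Q p.1 p.2)).card = ∑ a ∈ s, (t.filter (fun b => Q a b)).card := by
  rw [Finset.card_filter, Finset.sum_product]
  exact Finset.sum_congr rfl (fun a _ => (Finset.card_filter _ _).symm)

private lemma card_filter_prod_right' {α β : Type*} (s : Finset α) (t : Finset β) (Q : α → β → Prop)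
    [∀ a b, Decidable (Q a b)] :
    ((s ×ˢ t).filter (fun p => Q p.1 p.2)).card = ∑ b ∈ t, (s.filter (fun a => Q a b)).card := by
  rw [Finset.card_filter, Finset.sum_product, Finset.sum_comm]
  exact Finset.sum_congr rfl (fun b _ => (Finset.card_filter _ _).symm)

/-- For every positive integer `r` and every `c` with
`binom(r,2) - ⌊(r-2)/2⌋ ≤ c ≤ binom(r,2) - 1`, there is no finite
`(r, c)`-triangle-regular simple graph. -/
theorem stmt0 (r c : ℕ) (hr : 0 < r)
    (h1 : (r.choose 2 : ℤ) - ((r : ℤ) - 2) / 2 ≤ (c : ℤ))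
    (h2 : (c : ℤ) ≤ (r.choose 2 : ℤ) - 1) :
    ¬ ∃ (V : Type) (_ : Fintype V) (_ : Nonempty V) (G : SimpleGraph V),
        IsTriangleRegular G r c := by
  rintro ⟨V, _, ⟨v0⟩, G, hdeg, htri⟩
  classical
  -- arithmetic preliminaries
  have hcb : 2*c + 2 ≤ 2 * r.choose 2 ∧ 2 * r.choose 2 + 2 ≤ 2*c + r := by omega
  have hch : 2 * r.choose 2 + r = r * r := by
    obtain ⟨k, hk⟩ := Nat.even_mul_succ_self (r - 1)
    have hr1 : r - 1 + 1 = r := Nat.succ_pred_eq_of_pos hr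
    rw [hr1] at hk
    have h := Nat.choose_two_right r
    have hcm : r * (r - 1) = (r - 1) * r := Nat.mul_comm _ _
    have hsq : r * r = r * (r - 1) + r := by
      cases r with
      | zero => simp
      | succ n => rw [Nat.succ_sub_one, Nat.mul_succ]
    omega
  -- neighborhoods as finsets
  set N : V → Finset V := fun v => Finset.univ.filter (fun u => G.Adj v u) with hNdef
  have hNmem : ∀ v u, u ∈ N v ↔ G.Adj v u := by intro v u; simp [hNdef]
  have hNcard : ∀ v, (N v).card = r := by
    intro v
    have h := hdeg v
    rw [Nat.card_eq_fintype_card, Fintype.card_subtype] at h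
    exact h
  have hTcard : ∀ v, ((N v ×ˢ N v).filter (fun p => G.Adj p.1 p.2)).card = 2 * c := by
    intro v
    have h := htri v
    rw [Nat.card_eq_fintype_card, Fintype.card_subtype] at h
    rw [← h]
    congr 1
    ext p
    simp only [Finset.mem_filter, Finset.mem_product, hNmem, Finset.mem_univ, true_and]
    tauto
  -- nonadjacent distinct ordered pairs in each neighborhood
  set B : V → Finset (V × V) := fun v =>
    (N v ×ˢ N v).filter (fun p => p.1 ≠ p.2 ∧ ¬ G.Adj p.1 p.2) with hBdef
  have hBcard : ∀ v, r + (2*c + (B v).card) = r * r := by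
    intro v
    have hprod : (N v ×ˢ N v).card = r * r := by
      rw [Finset.card_product, hNcard]
    have hsplit1 := Finset.card_filter_add_card_filter_not
      (s := N v ×ˢ N v) (p := fun p => p.1 = p.2)
    have hdiag : ((N v ×ˢ N v).filter (fun p => p.1 = p.2)).card = r := by
      rw [card_filter_prod_left' (N v) (N v) (fun a b => a = b)]
      have h1' : ∀ a ∈ N v, ((N v).filter (fun b => a = b)).card = 1 := by
        intro a ha
        rw [Finset.filter_eq, if_pos ha, Finset.card_singleton]
      rw [Finset.sum_congr rfl h1', Finset.sum_const, smul_eq_mul, mul_one, hNcard]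
    have hsplit2 := Finset.card_filter_add_card_filter_not
      (s := (N v ×ˢ N v).filter (fun p => ¬ p.1 = p.2)) (p := fun p => G.Adj p.1 p.2)
    have hadjeq : ((N v ×ˢ N v).filter (fun p => ¬ p.1 = p.2)).filter (fun p => G.Adj p.1 p.2)
        = (N v ×ˢ N v).filter (fun p => G.Adj p.1 p.2) := by
      ext p
      simp only [Finset.mem_filter]
      constructor
      · tauto
      · rintro ⟨hp, ha⟩; exact ⟨⟨hp, G.ne_of_adj ha⟩, ha⟩
    have hBeq : ((N v ×ˢ N v).filter (fun p => ¬ p.1 = p.2)).filter (fun p => ¬ G.Adj p.1 p.2)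
        = B v := by
      ext p
      simp only [hBdef, Finset.mem_filter]
      tauto
    rw [hadjeq, hBeq, hTcard v] at hsplit2
    omega
  -- setup around the base vertex
  set v := v0 with hvdef
  set C : Finset V := insert v (N v) with hCdef
  have hvN : v ∉ N v := by simp [hNmem]
  have hCcard : C.card = r + 1 := by
    rw [hCdef, Finset.card_insert_of_notMem hvN, hNcard]
  have hNsubC : N v ⊆ C := by rw [hCdef]; exact Finset.subset_insert _ _
  set δ : V → ℕ := fun a => (C.filter (fun w => a ≠ w ∧ ¬ G.Adj a w)).card with hδdef
  have hpartA : ∀ a ∈ C, (C.filter (fun w => G.Adj a w)).card + δ a + 1 = r + 1 := by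
    intro a ha
    have h1' := Finset.card_filter_add_card_filter_not
      (s := C) (p := fun w => G.Adj a w)
    have h2' : C.filter (fun w => ¬ G.Adj a w)
        = insert a (C.filter (fun w => a ≠ w ∧ ¬ G.Adj a w)) := by
      ext w
      simp only [Finset.mem_filter, Finset.mem_insert]
      constructor
      · rintro ⟨hw, hna⟩
        by_cases h : a = w
        · exact Or.inl h.symm
        · exact Or.inr ⟨hw, h, hna⟩
      · rintro (h | ⟨hw, _, hna⟩)
        · subst h; exact ⟨ha, fun h => G.irrefl h⟩
        · exact ⟨hw, hna⟩
    have hnm : a ∉ C.filter (fun w => a ≠ w ∧ ¬ G.Adj a w) := by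
      simp
    rw [h2', Finset.card_insert_of_notMem hnm] at h1'
    rw [hCcard] at h1'
    simp only [hδdef]
    omega
  have hout : ∀ a ∈ C, ((N a) \ C).card = δ a := by
    intro a ha
    have hinter : (N a) ∩ C = C.filter (fun w => G.Adj a w) := by
      ext w
      simp only [Finset.mem_inter, Finset.mem_filter, hNmem]
      tauto
    have hsd : ((N a) \ C).card + ((N a) ∩ C).card = (N a).card := by
      rw [add_comm]
      exact Finset.card_inter_add_card_sdiff (N a) C
    rw [hinter, hNcard] at hsd
    have := hpartA a ha
    omega
  -- total nonedge count over C
  have hBC : B v = (C ×ˢ C).filter (fun p => p.1 ≠ p.2 ∧ ¬ G.Adj p.1 p.2) := by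
    ext p
    simp only [hBdef, Finset.mem_filter, Finset.mem_product, hCdef, Finset.mem_insert, hNmem]
    constructor
    · rintro ⟨⟨ha, hb⟩, h3⟩; exact ⟨⟨Or.inr ha, Or.inr hb⟩, h3⟩
    · rintro ⟨⟨ha, hb⟩, hne, hna⟩
      refine ⟨⟨?_, ?_⟩, hne, hna⟩
      · rcases ha with h | h
        · exfalso
          rcases hb with h' | h'
          · exact hne (h.trans h'.symm)
          · rw [h] at hna; exact hna h'
        · exact h
      · rcases hb with h | h
        · exfalso
          rcases ha with h' | h'
          · exact hne (h'.trans h.symm)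
          · rw [h] at hna; exact hna (G.adj_symm h')
        · exact h
  have hsumC : ∑ a ∈ C, δ a = (B v).card := by
    rw [hBC, card_filter_prod_left' C C (fun a b => a ≠ b ∧ ¬ G.Adj a b)]
  set M := (B v).card with hMdef
  have hM2 : 2 ≤ M ∧ M + 2 ≤ r := by
    have := hBcard v
    omega
  obtain ⟨⟨x, y⟩, hxyB⟩ : ∃ p, p ∈ B v := by
    apply Finset.Nonempty.exists_mem
    rw [← Finset.card_pos]
    omega
  have hxy : x ∈ N v ∧ y ∈ N v ∧ x ≠ y ∧ ¬ G.Adj x y := by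
    have := hxyB
    simp only [hBdef, Finset.mem_filter, Finset.mem_product] at this
    tauto
  have hxC : x ∈ C := hNsubC hxy.1
  have hyC : y ∈ C := hNsubC hxy.2.1
  -- the three parts of C around x, and the outside neighbors Z
  set S : Finset V := C.filter (fun w => x ≠ w ∧ ¬ G.Adj x w) with hSdef
  set A : Finset V := C.filter (fun w => G.Adj x w) with hAdef
  set Z : Finset V := (N x) \ C with hZdef
  set d := S.card with hddef
  set k := A.card with hkdef
  have hδx : δ x = d := rfl
  have hdk : k + d + 1 = r + 1 := by
    have := hpartA x hxC
    rw [hδx] at this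
    exact this
  have hd1 : 1 ≤ d := by
    have hyS : y ∈ S := by
      rw [hSdef]
      simp only [Finset.mem_filter]
      exact ⟨hyC, hxy.2.2.1, hxy.2.2.2⟩
    have := Finset.card_pos.mpr ⟨y, hyS⟩
    omega
  have hk1 : 1 ≤ k := by
    have hvA : v ∈ A := by
      rw [hAdef]
      simp only [Finset.mem_filter]
      refine ⟨by rw [hCdef]; exact Finset.mem_insert_self _ _, ?_⟩
      exact G.adj_symm ((hNmem v x).mp hxy.1)
    have := Finset.card_pos.mpr ⟨v, hvA⟩
    omega
  have hZcard : Z.card = d := by rw [hZdef, hout x hxC, hδx]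
  have hAsubN : A ⊆ N x := by
    intro a ha
    rw [hAdef] at ha
    simp only [Finset.mem_filter] at ha
    exact (hNmem x a).mpr ha.2
  have hAsubC : A ⊆ C := Finset.filter_subset _ _
  have hSsubC : S ⊆ C := Finset.filter_subset _ _
  have hZsubN : Z ⊆ N x := Finset.sdiff_subset
  have hZC : ∀ z ∈ Z, z ∉ C := by
    intro z hz
    rw [hZdef] at hz
    exact (Finset.mem_sdiff.mp hz).2
  -- the three finsets of nonadjacent ordered pairs inside N x
  set P1 : Finset (V × V) := (Z ×ˢ A).filter (fun p => ¬ G.Adj p.1 p.2) with hP1def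
  set P2 : Finset (V × V) := (A ×ˢ Z).filter (fun p => ¬ G.Adj p.1 p.2) with hP2def
  set P3 : Finset (V × V) := (A ×ˢ A).filter (fun p => p.1 ≠ p.2 ∧ ¬ G.Adj p.1 p.2) with hP3def
  set σA := ∑ a ∈ A, δ a with hσAdef
  set σS := ∑ s ∈ S, δ s with hσSdef
  -- (1) partition of the total sum
  have hCpart : C = insert x (A ∪ S) := by
    ext w
    simp only [Finset.mem_insert, Finset.mem_union, hAdef, hSdef, Finset.mem_filter]
    constructor
    · intro hw
      by_cases h : w = x
      · exact Or.inl h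
      · by_cases h' : G.Adj x w
        · exact Or.inr (Or.inl ⟨hw, h'⟩)
        · exact Or.inr (Or.inr ⟨hw, fun he => h he.symm, h'⟩)
    · rintro (h | h | h)
      · subst h; exact hxC
      · exact h.1
      · exact h.1
  have hxAS : x ∉ A ∪ S := by
    simp only [Finset.mem_union, hAdef, hSdef, Finset.mem_filter]
    rintro (h | h)
    · exact G.irrefl h.2
    · exact h.2.1 rfl
  have hASdisj : Disjoint A S := by
    rw [Finset.disjoint_left]
    intro a ha ha'
    rw [hAdef] at ha; rw [hSdef] at ha'
    simp only [Finset.mem_filter] at ha ha'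
    exact ha'.2.2 ha.2
  have hsum_part : d + (σA + σS) = M := by
    have h := hsumC
    rw [hCpart, Finset.sum_insert hxAS, Finset.sum_union hASdisj, hδx] at h
    rw [hσAdef, hσSdef]
    omega
  -- (2),(3) counting pairs between Z and A
  set E1 := ((Z ×ˢ A).filter (fun p => G.Adj p.1 p.2)).card with hE1def
  set E2 := ((A ×ˢ Z).filter (fun p => G.Adj p.1 p.2)).card with hE2def
  have hP1c : E1 + P1.card = d * k := by
    have := Finset.card_filter_add_card_filter_not
      (s := Z ×ˢ A) (p := fun p => G.Adj p.1 p.2)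
    rw [Finset.card_product, hZcard] at this
    exact this
  have hP2c : E2 + P2.card = k * d := by
    have := Finset.card_filter_add_card_filter_not
      (s := A ×ˢ Z) (p := fun p => G.Adj p.1 p.2)
    rw [Finset.card_product, hZcard] at this
    exact this
  have hkd : k * d = d * k := Nat.mul_comm _ _
  -- (4),(5) bounding the adjacent pairs between Z and A
  have houtbound : ∀ a ∈ A, ∀ (T : Finset V), (∀ z ∈ T, z ∈ Z ∧ G.Adj a z) → T.card ≤ δ a := by
    intro a ha T hT
    rw [← hout a (hAsubC ha)]
    apply Finset.card_le_card
    intro z hz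
    obtain ⟨hz1, hz2⟩ := hT z hz
    rw [Finset.mem_sdiff]
    exact ⟨(hNmem a z).mpr hz2, hZC z hz1⟩
  have hE1b : E1 ≤ σA := by
    rw [hE1def, card_filter_prod_right' Z A (fun z a => G.Adj z a)]
    apply Finset.sum_le_sum
    intro a ha
    apply houtbound a ha
    intro z hz
    simp only [Finset.mem_filter] at hz
    exact ⟨hz.1, G.adj_symm hz.2⟩
  have hE2b : E2 ≤ σA := by
    rw [hE2def, card_filter_prod_left' A Z (fun a z => G.Adj a z)]
    apply Finset.sum_le_sum
    intro a ha
    apply houtbound a ha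
    intro z hz
    simp only [Finset.mem_filter] at hz
    exact ⟨hz.1, hz.2⟩
  -- (6) splitting δ a for a ∈ A
  set QQ := ∑ a ∈ A, (S.filter (fun w => a ≠ w ∧ ¬ G.Adj a w)).card with hQQdef
  have hNA : σA = P3.card + QQ := by
    rw [hσAdef, hP3def, card_filter_prod_left' A A (fun a b => a ≠ b ∧ ¬ G.Adj a b), hQQdef,
      ← Finset.sum_add_distrib]
    apply Finset.sum_congr rfl
    intro a ha
    have hax : G.Adj a x := by
      rw [hAdef] at ha
      simp only [Finset.mem_filter] at ha
      exact G.adj_symm ha.2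
    have hPx : ¬ (a ≠ x ∧ ¬ G.Adj a x) := by
      intro h; exact h.2 hax
    have hsplit : C.filter (fun w => a ≠ w ∧ ¬ G.Adj a w)
        = A.filter (fun w => a ≠ w ∧ ¬ G.Adj a w) ∪ S.filter (fun w => a ≠ w ∧ ¬ G.Adj a w) := by
      rw [hCpart, Finset.filter_insert, if_neg hPx, Finset.filter_union]
    have hdisj : Disjoint (A.filter (fun w => a ≠ w ∧ ¬ G.Adj a w))
        (S.filter (fun w => a ≠ w ∧ ¬ G.Adj a w)) :=
      Finset.disjoint_filter_filter hASdisj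
    show δ a = _
    rw [hδdef]
    simp only
    rw [hsplit, Finset.card_union_of_disjoint hdisj]
  -- (7) bounding QQ
  have hQb : QQ + d ≤ σS := by
    have hQQ2 : QQ = ∑ s ∈ S, (A.filter (fun a => a ≠ s ∧ ¬ G.Adj a s)).card := by
      rw [hQQdef, ← card_filter_prod_left' A S (fun a w => a ≠ w ∧ ¬ G.Adj a w),
        card_filter_prod_right' A S (fun a w => a ≠ w ∧ ¬ G.Adj a w)]
    have hbound : ∀ s ∈ S, (A.filter (fun a => a ≠ s ∧ ¬ G.Adj a s)).card + 1 ≤ δ s := by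
      intro s hs
      obtain ⟨hsC, hxs, hnadj⟩ : s ∈ C ∧ x ≠ s ∧ ¬ G.Adj x s := by
        rw [hSdef] at hs
        simpa using hs
      have hxnm : x ∉ A.filter (fun a => a ≠ s ∧ ¬ G.Adj a s) := by
        intro h
        have : x ∈ A := Finset.mem_of_mem_filter _ h
        exact hxAS (Finset.mem_union_left _ this)
      have hsub : insert x (A.filter (fun a => a ≠ s ∧ ¬ G.Adj a s))
          ⊆ C.filter (fun w => s ≠ w ∧ ¬ G.Adj s w) := by
        intro w hw
        rcases Finset.mem_insert.mp hw with h | h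
        · subst h
          simp only [Finset.mem_filter]
          exact ⟨hxC, fun he => hxs he.symm, fun ha => hnadj (G.adj_symm ha)⟩
        · simp only [Finset.mem_filter] at h ⊢
          exact ⟨hAsubC h.1, fun he => h.2.1 he.symm, fun ha => h.2.2 (G.adj_symm ha)⟩
      have := Finset.card_le_card hsub
      rw [Finset.card_insert_of_notMem hxnm] at this
      exact this
    calc QQ + d = ∑ s ∈ S, ((A.filter (fun a => a ≠ s ∧ ¬ G.Adj a s)).card + 1) := by
            rw [Finset.sum_add_distrib, Finset.sum_const, smul_eq_mul, mul_one, ← hQQ2, hddef]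
      _ ≤ ∑ s ∈ S, δ s := Finset.sum_le_sum hbound
      _ = σS := rfl
  -- (8) the three parts are disjoint subsets of B x
  have hP1sub : P1 ⊆ B x := by
    rintro ⟨p, q⟩ hp
    simp only [hP1def, Finset.mem_filter, Finset.mem_product] at hp
    obtain ⟨⟨hpZ, hqA⟩, hna⟩ := hp
    simp only [hBdef, Finset.mem_filter, Finset.mem_product]
    refine ⟨⟨hZsubN hpZ, hAsubN hqA⟩, ?_, hna⟩
    intro he
    exact hZC p hpZ (he ▸ hAsubC hqA)
  have hP2sub : P2 ⊆ B x := by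
    rintro ⟨p, q⟩ hp
    simp only [hP2def, Finset.mem_filter, Finset.mem_product] at hp
    obtain ⟨⟨hpA, hqZ⟩, hna⟩ := hp
    simp only [hBdef, Finset.mem_filter, Finset.mem_product]
    refine ⟨⟨hAsubN hpA, hZsubN hqZ⟩, ?_, hna⟩
    intro he
    exact hZC q hqZ (he ▸ hAsubC hpA)
  have hP3sub : P3 ⊆ B x := by
    rintro ⟨p, q⟩ hp
    simp only [hP3def, Finset.mem_filter, Finset.mem_product] at hp
    obtain ⟨⟨hpA, hqA⟩, hne, hna⟩ := hp
    simp only [hBdef, Finset.mem_filter, Finset.mem_product]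
    exact ⟨⟨hAsubN hpA, hAsubN hqA⟩, hne, hna⟩
  have hd12 : Disjoint P1 P2 := by
    rw [Finset.disjoint_left]
    rintro ⟨p, q⟩ hp hp'
    simp only [hP1def, Finset.mem_filter, Finset.mem_product] at hp
    simp only [hP2def, Finset.mem_filter, Finset.mem_product] at hp'
    exact hZC p hp.1.1 (hAsubC hp'.1.1)
  have hd123 : Disjoint (P1 ∪ P2) P3 := by
    rw [Finset.disjoint_left]
    rintro ⟨p, q⟩ hp hp'
    simp only [hP3def, Finset.mem_filter, Finset.mem_product] at hp'
    rcases Finset.mem_union.mp hp with h | h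
    · simp only [hP1def, Finset.mem_filter, Finset.mem_product] at h
      exact hZC p h.1.1 (hAsubC hp'.1.1)
    · simp only [hP2def, Finset.mem_filter, Finset.mem_product] at h
      exact hZC q h.1.2 (hAsubC hp'.1.2)
  have hPB : P1.card + P2.card + P3.card ≤ M := by
    have hsub : P1 ∪ P2 ∪ P3 ⊆ B x :=
      Finset.union_subset (Finset.union_subset hP1sub hP2sub) hP3sub
    have hcardu : (P1 ∪ P2 ∪ P3).card = P1.card + P2.card + P3.card := by
      rw [Finset.card_union_of_disjoint hd123, Finset.card_union_of_disjoint hd12]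
    have hle := Finset.card_le_card hsub
    rw [hcardu] at hle
    have hBx := hBcard x
    have hBv := hBcard v
    omega
  -- (9) final contradiction
  have ht : k ≤ d * k := Nat.le_mul_of_pos_left k hd1
  omega
end

section
/- There exists a uniform constant K such that for any finite abelian group G, any subset S ⊆ G, and any ε > 0: if the probability over uniformly random a, b ∈ S that a + b ∈ S is at least 1 - ε, then there exists a subgroup H ≤ G with |H| ≤ (1 + Kε)|S| and |H ∩ S| ≥ (1 - Kε)|S|. -/
set_option linter.unusedSectionVars false
set_option maxHeartbeats 1000000
open Finset

section helpers
variable {A : Type} [AddCommGroup A] [Fintype A] [DecidableEq A]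

/-- number of `s ∈ S` with `x + s ∈ S` -/
private def gg (S : Finset A) (x : A) : ℕ := (S.filter (fun s => x + s ∈ S)).card

private lemma gg_le (S : Finset A) (x : A) : gg S x ≤ S.card := card_filter_le _ _

private lemma gg_zero (S : Finset A) : gg S 0 = S.card := by
  unfold gg
  rw [filter_true_of_mem]
  intro s hs; simpa using hs

private lemma gg_neg (S : Finset A) (x : A) : gg S (-x) = gg S x := by
  unfold gg
  apply Finset.card_bij (fun s _ => -x + s)
  · intro s hs
    simp only [mem_filter] at hs ⊢
    exact ⟨hs.2, by simpa [add_assoc] using hs.1⟩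
  · intro a ha b hb h
    exact by simpa using h
  · intro t ht
    simp only [mem_filter] at ht
    exact ⟨x + t, by simp [mem_filter, ht.1, ht.2], by simp⟩

private lemma gg_add (S : Finset A) (x y : A) :
    gg S x + gg S y ≤ gg S (x + y) + S.card := by
  classical
  -- split the set counted by gg S y according to whether x + y + s ∈ S
  have hsplit : gg S y =
      (S.filter (fun s => y + s ∈ S ∧ x + y + s ∈ S)).card +
      (S.filter (fun s => y + s ∈ S ∧ ¬ (x + y + s ∈ S))).card := by
    unfold gg
    rw [← filter_filter, ← filter_filter, card_filter_add_card_filter_not]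
  have h1 : (S.filter (fun s => y + s ∈ S ∧ x + y + s ∈ S)).card ≤ gg S (x + y) := by
    apply card_le_card
    intro s hs
    simp only [mem_filter] at hs ⊢
    exact ⟨hs.1, hs.2.2⟩
  have h2 : (S.filter (fun s => y + s ∈ S ∧ ¬ (x + y + s ∈ S))).card ≤
      (S.filter (fun t => ¬ (x + t ∈ S))).card := by
    apply card_le_card_of_injOn (fun s => y + s)
    · intro s hs
      simp only [coe_filter, Set.mem_setOf_eq, mem_filter] at hs ⊢
      exact ⟨hs.2.1, by simpa [add_assoc] using hs.2.2⟩
    · intro a _ b _ h; simpa using h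
  have h3 : (S.filter (fun t => ¬ (x + t ∈ S))).card + gg S x = S.card := by
    unfold gg
    rw [add_comm]
    exact card_filter_add_card_filter_not _
  omega

private lemma gg_sum (S : Finset A) : ∑ x : A, gg S x = S.card ^ 2 := by
  unfold gg
  simp only [Finset.card_filter]
  rw [Finset.sum_comm]
  have : ∀ s : A, ∑ x : A, (if x + s ∈ S then 1 else 0) = S.card := by
    intro s
    rw [← Finset.card_filter]
    apply Finset.card_bij (fun x _ => x + s)
    · intro x hx; simpa using hx
    · intro a _ b _ h; simpa using h
    · intro t ht; exact ⟨t - s, by simp [ht], by simp⟩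
  calc ∑ s ∈ S, ∑ x : A, (if x + s ∈ S then 1 else 0)
      = ∑ s ∈ S, S.card := by exact Finset.sum_congr rfl (fun s _ => this s)
    _ = S.card ^ 2 := by rw [Finset.sum_const, smul_eq_mul, sq]

private lemma gg_good (S : Finset A) :
    ((S ×ˢ S).filter fun p => p.1 + p.2 ∈ S).card = ∑ a ∈ S, gg S a := by
  unfold gg
  rw [Finset.card_filter, Finset.sum_product, ]
  congr 1
  ext a
  rw [Finset.card_filter]

end helpers

/-- There is a uniform constant `K` such that for any finite abelian group `A`,
any nonempty subset `S ⊆ A`, and any `ε > 0`: if the probability over uniform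
`a, b ∈ S` that `a + b ∈ S` is at least `1 - ε` (i.e. the number of such ordered
pairs is at least `(1 - ε)|S|²`), then there is a subgroup `H ≤ A` with
`|H| ≤ (1 + Kε)|S|` and `|H ∩ S| ≥ (1 - Kε)|S|`. -/
theorem stmt5 :
    ∃ K : ℝ, 0 < K ∧
      ∀ (A : Type) [AddCommGroup A] [Fintype A] [DecidableEq A]
        (S : Finset A) (ε : ℝ), 0 < ε → S.Nonempty →
        (1 - ε) * (S.card : ℝ) ^ 2 ≤
          (((S ×ˢ S).filter fun p => p.1 + p.2 ∈ S).card : ℝ) →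
        ∃ H : AddSubgroup A,
          (Nat.card H : ℝ) ≤ (1 + K * ε) * (S.card : ℝ) ∧
          (1 - K * ε) * (S.card : ℝ) ≤ (((H : Set A) ∩ (S : Set A)).ncard : ℝ) := by
  classical
  refine ⟨100, by norm_num, ?_⟩
  intro A _ _ _ S ε hε hS hgood
  have hn : 1 ≤ S.card := Finset.card_pos.mpr hS
  set n := S.card with hn_def
  set N : ℝ := (n : ℝ) with hN_def
  have hN1 : (1:ℝ) ≤ N := by rw [hN_def]; exact_mod_cast hn
  have hN : (0:ℝ) < N := lt_of_lt_of_le one_pos hN1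
  rcases le_or_gt (1/100 : ℝ) ε with hbig | hsmall
  · -- trivial case: ε ≥ 1/100, use ⊥
    refine ⟨⊥, ?_, ?_⟩
    · have : Nat.card (⊥ : AddSubgroup A) = 1 := by simp
      rw [this]
      push_cast
      nlinarith
    · have h1 : (1 - 100 * ε) ≤ 0 := by linarith
      have h2 : (0:ℝ) ≤ (((⊥ : AddSubgroup A) : Set A) ∩ (S : Set A)).ncard := by positivity
      nlinarith
  · -- main case: ε < 1/100
    -- total bad-pair count
    have hprod : ((S ×ˢ S).filter fun p => p.1 + p.2 ∈ S).card +
        ((S ×ˢ S).filter fun p => ¬ (p.1 + p.2 ∈ S)).card = n * n := by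
      rw [Finset.card_filter_add_card_filter_not, Finset.card_product]
    set Bad := (S ×ˢ S).filter (fun p => ¬ (p.1 + p.2 ∈ S)) with hBad_def
    have hbad : (Bad.card : ℝ) ≤ ε * N ^ 2 := by
      have h1 : ((Bad.card : ℝ)) = (n:ℝ) * n -
          ((S ×ˢ S).filter fun p => p.1 + p.2 ∈ S).card := by
        rw [eq_sub_iff_add_eq]
        exact_mod_cast (by omega : Bad.card + ((S ×ˢ S).filter fun p => p.1 + p.2 ∈ S).card = n * n)
      rw [h1, hN_def] at *
      nlinarith
    -- the set of "good" elements of S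
    set S' := S.filter (fun a => (9/10:ℝ) * N ≤ (gg S a : ℝ)) with hS'_def
    -- Markov: S \ S' is small
    have hmark : ((S \ S').card : ℝ) ≤ 10 * ε * N := by
      have hsum : ∑ a ∈ S, ((N - (gg S a : ℝ))) ≤ ε * N ^ 2 := by
        have h1 : ∑ a ∈ S, ((N - (gg S a : ℝ)))
            = N * N - (((S ×ˢ S).filter fun p => p.1 + p.2 ∈ S).card : ℝ) := by
          rw [Finset.sum_sub_distrib, Finset.sum_const, gg_good]
          push_cast [hN_def]
          ring
        rw [h1]; nlinarith
      have hterm : ∀ a ∈ S \ S', (1/10:ℝ) * N ≤ N - (gg S a : ℝ) := by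
        intro a ha
        rw [Finset.mem_sdiff, hS'_def, Finset.mem_filter] at ha
        have := ha.2
        push_neg at this
        have h2 := this ha.1
        linarith
      have hle : ((S \ S').card : ℝ) * ((1/10:ℝ) * N) ≤ ∑ a ∈ S \ S', (N - (gg S a : ℝ)) := by
        have := Finset.card_nsmul_le_sum (S \ S') (fun a => N - (gg S a : ℝ)) ((1/10:ℝ) * N) hterm
        simpa [nsmul_eq_mul] using this
      have hsub : ∑ a ∈ S \ S', (N - (gg S a : ℝ)) ≤ ∑ a ∈ S, (N - (gg S a : ℝ)) := by
        apply Finset.sum_le_sum_of_subset_of_nonneg (Finset.sdiff_subset)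
        intro a ha _
        have : (gg S a : ℝ) ≤ N := by rw [hN_def]; exact_mod_cast gg_le S a
        linarith
      have hc := le_trans hle (le_trans hsub hsum)
      nlinarith [(Nat.cast_nonneg (S \ S').card : (0:ℝ) ≤ ((S \ S').card : ℝ))]
    -- the key gap claim
    have key : ∀ x : A, (2/5:ℝ) * N ≤ (gg S x : ℝ) → (4/5:ℝ) * N ≤ (gg S x : ℝ) := by
      intro x hx
      set F := S'.filter (fun s => x + s ∈ S') with hF_def
      -- gg S x counts s ∈ S with x+s ∈ S; such s are in F, or in S \ S',
      -- or x+s ∈ S \ S'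
      have hcover : S.filter (fun s => x + s ∈ S) ⊆
          (F ∪ (S \ S')) ∪ (S.filter (fun s => x + s ∈ S \ S')) := by
        intro s hs
        rw [Finset.mem_filter] at hs
        simp only [Finset.mem_union, hF_def, Finset.mem_filter, Finset.mem_sdiff]
        by_cases h1 : s ∈ S'
        · by_cases h2 : x + s ∈ S'
          · exact Or.inl (Or.inl ⟨h1, h2⟩)
          · exact Or.inr ⟨hs.1, hs.2, h2⟩
        · exact Or.inl (Or.inr ⟨hs.1, h1⟩)
      have hshift : (S.filter (fun s => x + s ∈ S \ S')).card ≤ (S \ S').card := by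
        apply Finset.card_le_card_of_injOn (fun s => x + s)
        · intro s hs
          rw [Finset.mem_coe, Finset.mem_filter] at hs
          exact hs.2
        · intro a _ b _ h; simpa using h
      have hcard : gg S x ≤ F.card + (S \ S').card + (S \ S').card := by
        calc gg S x ≤ ((F ∪ (S \ S')) ∪ (S.filter (fun s => x + s ∈ S \ S'))).card :=
              Finset.card_le_card hcover
          _ ≤ (F ∪ (S \ S')).card + (S.filter (fun s => x + s ∈ S \ S')).card :=
              Finset.card_union_le _ _
          _ ≤ (F.card + (S \ S').card) + (S \ S').card := by
              gcongr
              exact Finset.card_union_le _ _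
      -- hence F is nonempty
      have hFpos : 0 < F.card := by
        by_contra hcon
        push_neg at hcon
        have hFc : F.card = 0 := Nat.le_zero.mp hcon
        have hc : (gg S x : ℝ) ≤ ((S \ S').card : ℝ) + ((S \ S').card : ℝ) := by
          exact_mod_cast (show gg S x ≤ (S \ S').card + (S \ S').card by omega)
        nlinarith
      obtain ⟨s, hsF⟩ := Finset.card_pos.mp hFpos
      rw [hF_def, Finset.mem_filter] at hsF
      obtain ⟨hs1, hs2⟩ := hsF
      -- s ∈ S' and x + s ∈ S'
      rw [hS'_def, Finset.mem_filter] at hs1 hs2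
      have hadd := gg_add S (x + s) (-s)
      rw [show x + s + -s = x by abel, gg_neg] at hadd
      have hc : (gg S (x + s) : ℝ) + (gg S s : ℝ) ≤ (gg S x : ℝ) + N := by
        rw [hN_def]; exact_mod_cast hadd
      linarith [hs1.2, hs2.2]
    -- the subgroup
    set Hgrp : AddSubgroup A :=
      { carrier := {x | (2/5:ℝ) * N ≤ (gg S x : ℝ)}
        zero_mem' := by
          simp only [Set.mem_setOf_eq, gg_zero]
          rw [← hn_def, ← hN_def]; linarith
        add_mem' := by
          intro x y hx hy
          simp only [Set.mem_setOf_eq] at hx hy ⊢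
          have hx4 := key x hx
          have hy4 := key y hy
          have hadd := gg_add S x y
          have hc : (gg S x : ℝ) + (gg S y : ℝ) ≤ (gg S (x + y) : ℝ) + N := by
            rw [hN_def]; exact_mod_cast hadd
          linarith
        neg_mem' := by
          intro x hx
          simp only [Set.mem_setOf_eq, gg_neg] at hx ⊢
          exact hx } with hHgrp_def
    have hmemH : ∀ x : A, x ∈ Hgrp ↔ (2/5:ℝ) * N ≤ (gg S x : ℝ) := fun x => Iff.rfl
    set Hfin : Finset A := Finset.univ.filter (fun x => x ∈ Hgrp) with hHfin_def
    have hmemHfin : ∀ x : A, x ∈ Hfin ↔ (2/5:ℝ) * N ≤ (gg S x : ℝ) := by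
      intro x
      rw [hHfin_def, Finset.mem_filter]
      simp [hmemH]
    -- S' ⊆ Hfin
    have hS'H : S' ⊆ Hfin := by
      intro a ha
      rw [hS'_def, Finset.mem_filter] at ha
      rw [hmemHfin]
      linarith [ha.2]
    -- every element of Hfin has large gg
    have hkeyH : ∀ x ∈ Hfin, (4/5:ℝ) * N ≤ (gg S x : ℝ) := by
      intro x hx
      exact key x ((hmemHfin x).mp hx)
    -- |Hfin| ≤ (5/4) N
    have hHle : (Hfin.card : ℝ) ≤ (5/4) * N := by
      have h1 : (Hfin.card : ℝ) * ((4/5:ℝ) * N) ≤ ∑ x ∈ Hfin, (gg S x : ℝ) := by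
        have := Finset.card_nsmul_le_sum Hfin (fun x => (gg S x : ℝ)) ((4/5:ℝ) * N) hkeyH
        simpa [nsmul_eq_mul] using this
      have h2 : ∑ x ∈ Hfin, (gg S x : ℝ) ≤ ∑ x : A, (gg S x : ℝ) :=
        Finset.sum_le_sum_of_subset_of_nonneg (Finset.subset_univ _)
          (fun a _ _ => by positivity)
      have h3 : ∑ x : A, (gg S x : ℝ) = N ^ 2 := by
        rw [hN_def, ← Nat.cast_sum]
        exact_mod_cast congrArg (Nat.cast : ℕ → ℝ) (gg_sum S)
      rw [h3] at h2
      have h4 := le_trans h1 h2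
      nlinarith [(Nat.cast_nonneg Hfin.card : (0:ℝ) ≤ (Hfin.card : ℝ))]
    -- bootstrap part 1: S \ Hfin is tiny
    set T := S ∩ Hfin with hT_def
    have hTsubS : T ⊆ S := Finset.inter_subset_left
    have hTsubH : T ⊆ Hfin := Finset.inter_subset_right
    have hTB : T.card + (S \ Hfin).card = n := Finset.card_inter_add_card_sdiff S Hfin
    have hBsmall : ((S \ Hfin).card : ℝ) ≤ 10 * ε * N := by
      refine le_trans ?_ hmark
      exact_mod_cast Finset.card_le_card (Finset.sdiff_subset_sdiff (le_refl S) hS'H)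
    -- per-b bound
    have hperb : ∀ b ∈ S \ Hfin,
        T.card ≤ (T.filter (fun a => ¬ (a + b ∈ S))).card + (S \ Hfin).card := by
      intro b hb
      have hbS : b ∈ S := (Finset.mem_sdiff.mp hb).1
      have hbH : b ∉ Hfin := (Finset.mem_sdiff.mp hb).2
      have hsplit : (T.filter (fun a => ¬ (a + b ∈ S))).card
          + (T.filter (fun a => a + b ∈ S)).card = T.card := by
        rw [add_comm]
        exact Finset.card_filter_add_card_filter_not _
      have hinj : (T.filter (fun a => a + b ∈ S)).card ≤ (S \ Hfin).card := by
        apply Finset.card_le_card_of_injOn (fun a => a + b)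
        · intro a ha
          rw [Finset.mem_coe, Finset.mem_filter] at ha
          have haT := ha.1
          have haH : a ∈ Hgrp := by
            have := hTsubH haT
            rw [hHfin_def, Finset.mem_filter] at this
            exact this.2
          rw [Finset.mem_coe, Finset.mem_sdiff]
          refine ⟨ha.2, ?_⟩
          intro hcon
          apply hbH
          rw [hHfin_def, Finset.mem_filter] at hcon ⊢
          refine ⟨Finset.mem_univ _, ?_⟩
          have : (a + b) - a ∈ Hgrp := AddSubgroup.sub_mem _ hcon.2 haH
          simpa using this
        · intro a _ c _ h; simpa using h
      omega
    -- sum it up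
    set Subbad1 := (T ×ˢ (S \ Hfin)).filter (fun p => ¬ (p.1 + p.2 ∈ S)) with hSb1_def
    have hSb1sub : Subbad1 ⊆ Bad := by
      apply Finset.filter_subset_filter
      exact Finset.product_subset_product hTsubS Finset.sdiff_subset
    have hSb1card : Subbad1.card
        = ∑ b ∈ S \ Hfin, (T.filter (fun a => ¬ (a + b ∈ S))).card := by
      rw [hSb1_def, Finset.card_filter, Finset.sum_product, Finset.sum_comm]
      exact Finset.sum_congr rfl (fun b _ => by rw [Finset.card_filter])
    have hpart1 : (S \ Hfin).card * T.card ≤ Bad.card + (S \ Hfin).card * (S \ Hfin).card := by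
      calc (S \ Hfin).card * T.card = ∑ _b ∈ S \ Hfin, T.card := by
            rw [Finset.sum_const, smul_eq_mul]
        _ ≤ ∑ b ∈ S \ Hfin, ((T.filter (fun a => ¬ (a + b ∈ S))).card + (S \ Hfin).card) :=
            Finset.sum_le_sum hperb
        _ = Subbad1.card + (S \ Hfin).card * (S \ Hfin).card := by
            rw [Finset.sum_add_distrib, hSb1card, Finset.sum_const, smul_eq_mul]
        _ ≤ Bad.card + (S \ Hfin).card * (S \ Hfin).card := by
            have := Finset.card_le_card hSb1sub
            omega
    have hB2ε : ((S \ Hfin).card : ℝ) ≤ 2 * ε * N := by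
      have hc : ((S \ Hfin).card : ℝ) * (T.card : ℝ)
          ≤ (Bad.card : ℝ) + ((S \ Hfin).card : ℝ) * ((S \ Hfin).card : ℝ) := by
        exact_mod_cast hpart1
      have hTc : (T.card : ℝ) = N - ((S \ Hfin).card : ℝ) := by
        rw [hN_def]
        have : (T.card : ℝ) + ((S \ Hfin).card : ℝ) = (n : ℝ) := by exact_mod_cast hTB
        linarith
      rw [hTc] at hc
      nlinarith [(Nat.cast_nonneg (S \ Hfin).card : (0:ℝ) ≤ ((S \ Hfin).card : ℝ))]
    have hTlarge : (1 - 2 * ε) * N ≤ (T.card : ℝ) := by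
      have : (T.card : ℝ) + ((S \ Hfin).card : ℝ) = N := by
        rw [hN_def]; exact_mod_cast hTB
      linarith
    -- bootstrap part 2: Hfin \ S is tiny
    have hHT : T.card + (Hfin \ S).card = Hfin.card := by
      rw [hT_def, Finset.inter_comm]
      exact Finset.card_inter_add_card_sdiff Hfin S
    have hperh : ∀ h ∈ Hfin \ S,
        2 * T.card ≤ ((T ×ˢ T).filter (fun p => p.1 + p.2 = h)).card + Hfin.card := by
      intro h hh
      have hhH : h ∈ Hfin := (Finset.mem_sdiff.mp hh).1
      have hhgrp : h ∈ Hgrp := by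
        rw [hHfin_def, Finset.mem_filter] at hhH; exact hhH.2
      have hsplit : (T.filter (fun a => h - a ∈ T)).card
          + (T.filter (fun a => ¬ (h - a ∈ T))).card = T.card :=
        Finset.card_filter_add_card_filter_not _
      have hinj1 : (T.filter (fun a => h - a ∈ T)).card
          ≤ ((T ×ˢ T).filter (fun p => p.1 + p.2 = h)).card := by
        apply Finset.card_le_card_of_injOn (fun a => (a, h - a))
        · intro a ha
          rw [Finset.mem_coe, Finset.mem_filter] at ha
          rw [Finset.mem_coe, Finset.mem_filter, Finset.mem_product]
          exact ⟨⟨ha.1, ha.2⟩, by rw [add_comm, sub_add_cancel]⟩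
        · intro a _ c _ hco
          exact congrArg Prod.fst hco
      have hinj2 : (T.filter (fun a => ¬ (h - a ∈ T))).card ≤ (Hfin \ T).card := by
        apply Finset.card_le_card_of_injOn (fun a => h - a)
        · intro a ha
          rw [Finset.mem_coe, Finset.mem_filter] at ha
          have haH : a ∈ Hgrp := by
            have := hTsubH ha.1
            rw [hHfin_def, Finset.mem_filter] at this; exact this.2
          rw [Finset.mem_coe, Finset.mem_sdiff]
          constructor
          · rw [hHfin_def, Finset.mem_filter]
            exact ⟨Finset.mem_univ _, AddSubgroup.sub_mem _ hhgrp haH⟩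
          · exact ha.2
        · intro a _ c _ hco
          have : h - a = h - c := hco
          have := sub_right_injective this
          exact this
      have hsd : (Hfin \ T).card = Hfin.card - T.card := Finset.card_sdiff_of_subset hTsubH
      have hTH : T.card ≤ Hfin.card := Finset.card_le_card hTsubH
      omega
    -- the fibers are disjoint subsets of Bad
    have hfibsub : ∀ h ∈ Hfin \ S,
        (T ×ˢ T).filter (fun p => p.1 + p.2 = h) ⊆ Bad := by
      intro h hh
      have hhS : h ∉ S := (Finset.mem_sdiff.mp hh).2
      intro p hp
      rw [Finset.mem_filter, Finset.mem_product] at hp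
      rw [hBad_def, Finset.mem_filter, Finset.mem_product]
      refine ⟨⟨hTsubS hp.1.1, hTsubS hp.1.2⟩, ?_⟩
      rw [hp.2]; exact hhS
    have hfibsum : ∑ h ∈ Hfin \ S, ((T ×ˢ T).filter (fun p => p.1 + p.2 = h)).card
        ≤ Bad.card := by
      rw [← Finset.card_biUnion]
      · apply Finset.card_le_card
        intro p hp
        rw [Finset.mem_biUnion] at hp
        obtain ⟨h, hh, hph⟩ := hp
        exact hfibsub h hh hph
      · intro h1 _ h2 _ hne
        apply Finset.disjoint_left.mpr
        intro p hp1 hp2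
        rw [Finset.mem_filter] at hp1 hp2
        exact hne (hp1.2 ▸ hp2.2)
    have hpart2 : (Hfin \ S).card * (2 * T.card)
        ≤ Bad.card + (Hfin \ S).card * Hfin.card := by
      calc (Hfin \ S).card * (2 * T.card) = ∑ _h ∈ Hfin \ S, 2 * T.card := by
            rw [Finset.sum_const, smul_eq_mul]
        _ ≤ ∑ h ∈ Hfin \ S,
              (((T ×ˢ T).filter (fun p => p.1 + p.2 = h)).card + Hfin.card) :=
            Finset.sum_le_sum hperh
        _ = (∑ h ∈ Hfin \ S, ((T ×ˢ T).filter (fun p => p.1 + p.2 = h)).card)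
              + (Hfin \ S).card * Hfin.card := by
            rw [Finset.sum_add_distrib, Finset.sum_const, smul_eq_mul]
        _ ≤ Bad.card + (Hfin \ S).card * Hfin.card := by omega
    have hD2ε : ((Hfin \ S).card : ℝ) ≤ 2 * ε * N := by
      have hc : ((Hfin \ S).card : ℝ) * (2 * (T.card : ℝ))
          ≤ (Bad.card : ℝ) + ((Hfin \ S).card : ℝ) * (Hfin.card : ℝ) := by
        exact_mod_cast hpart2
      have hHc : (Hfin.card : ℝ) = (T.card : ℝ) + ((Hfin \ S).card : ℝ) := by
        exact_mod_cast hHT.symm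
      rw [hHc] at hc
      have hDnn : (0:ℝ) ≤ ((Hfin \ S).card : ℝ) := Nat.cast_nonneg _
      have hTD : ((3:ℝ)/4 - 4*ε) * N ≤ (T.card : ℝ) - ((Hfin \ S).card : ℝ) := by
        have hD : ((Hfin \ S).card : ℝ) = (Hfin.card : ℝ) - (T.card : ℝ) := by
          rw [hHc]; ring
        rw [hD]
        linarith
      have hmain : ((Hfin \ S).card : ℝ) * ((T.card : ℝ) - ((Hfin \ S).card : ℝ))
          ≤ ε * N ^ 2 := by nlinarith [hc, hbad]
      have hpos : (0:ℝ) < ((3:ℝ)/4 - 4*ε) * N := by nlinarith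
      nlinarith [mul_le_mul_of_nonneg_left hTD hDnn, mul_pos hε (mul_pos hN hN)]
    -- conclusion
    refine ⟨Hgrp, ?_, ?_⟩
    · -- |H| ≤ (1 + 100ε) N
      have hNatcard : (Nat.card Hgrp : ℝ) = (Hfin.card : ℝ) := by
        congr 1
        rw [Nat.card_eq_fintype_card, Fintype.card_subtype]
      rw [hNatcard]
      have hTn : (T.card : ℝ) ≤ N := by
        rw [hN_def]; exact_mod_cast Finset.card_le_card hTsubS
      have hHc : (Hfin.card : ℝ) = (T.card : ℝ) + ((Hfin \ S).card : ℝ) := by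
        exact_mod_cast hHT.symm
      rw [hHc]
      nlinarith
    · -- (1 - 100ε) N ≤ |H ∩ S|
      have hsetEq : ((Hgrp : Set A) ∩ (S : Set A)) = (T : Set A) := by
        ext x
        simp only [Set.mem_inter_iff, SetLike.mem_coe, Finset.coe_inter, Finset.mem_coe,
          hT_def, Set.mem_inter_iff]
        constructor
        · rintro ⟨h1, h2⟩
          refine ⟨h2, ?_⟩
          rw [hHfin_def, Finset.mem_filter]
          exact ⟨Finset.mem_univ _, h1⟩
        · rintro ⟨h1, h2⟩
          rw [hHfin_def, Finset.mem_filter] at h2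
          exact ⟨h2.2, h1⟩
      rw [hsetEq, Set.ncard_coe_finset]
      nlinarith
end

section
/- Let G be a finite abelian group, χ: G → ℂ× a character, and S ⊆ G a symmetric subset with at most 10ε|S|² ordered pairs (a,b) ∈ S×S satisfying a+b ∉ S. For x ∈ S write χ(x) = e^{iθ_x} with θ_x ∈ [-π, π). For any 0 ≤ θ < π/2 and any δ > sqrt(10ε): if at least (1-δ)|S| elements x ∈ S have θ_x ∈ [-θ,θ], then at least (1-3δ)|S| elements x ∈ S have θ_x ∈ [-θ/2, θ/2]. -/
open Real Complex

private lemma chi_ne {A : Type*} [AddCommGroup A] (χ : AddChar A ℂ) (x : A) : χ x ≠ 0 := by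
  intro h
  have h1 : χ x * χ (-x) = 1 := by
    rw [← AddChar.map_add_eq_mul, add_neg_cancel, AddChar.map_zero_eq_one]
  rw [h, zero_mul] at h1
  exact one_ne_zero h1.symm

private lemma argneg {A : Type*} [AddCommGroup A] (χ : AddChar A ℂ) (x : A)
    (h : (χ x).arg ≠ π) : (χ (-x)).arg = -(χ x).arg := by
  rw [AddChar.map_neg_eq_inv, Complex.arg_inv, if_neg h]

/-- Core geometric fact: if `arg u ∈ (θ/2, θ]` and `arg v ∈ (θ/2, π]`, then
`|arg (u*v)| > θ` (for `0 ≤ θ < π/2`). -/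
private lemma arg_mul_gt {θ : ℝ} (hθ0 : 0 ≤ θ) (hθ : θ < π / 2)
    {u v : ℂ} (hu : u ≠ 0) (hv : v ≠ 0)
    (hu1 : θ / 2 < u.arg) (hu2 : u.arg ≤ θ) (hv1 : θ / 2 < v.arg) :
    θ < |(u * v).arg| := by
  by_contra hle
  push_neg at hle
  rw [abs_le] at hle
  have hang : (((u * v).arg : ℝ) : Real.Angle) = ((u.arg + v.arg : ℝ) : Real.Angle) :=
    Complex.arg_mul_coe_angle hu hv
  obtain ⟨k, hk⟩ := Real.Angle.angle_eq_iff_two_pi_dvd_sub.mp hang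
  have hπ := Real.pi_pos
  have hvπ := Complex.arg_le_pi v
  have hk1 : (k : ℝ) < 0 := by nlinarith [hle.2]
  have hk2 : (-1 : ℝ) < k := by nlinarith [hle.1]
  have ha : (-1 : ℤ) < k := by exact_mod_cast hk2
  have hb : k < (0 : ℤ) := by exact_mod_cast hk1
  omega

set_option maxHeartbeats 2000000 in
/-- Let `A` be a finite abelian group, `χ` a character of `A`, and `S ⊆ A`
symmetric with at most `10ε|S|²` ordered pairs `(a,b) ∈ S×S` with `a+b ∉ S`.
Writing `θ_x` for the angle of `χ(x)` (its complex argument), for any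
`0 ≤ θ < π/2` and `δ > √(10ε)`: if at least `(1-δ)|S|` elements of `S` have
`θ_x ∈ [-θ, θ]`, then at least `(1-3δ)|S|` elements have `θ_x ∈ [-θ/2, θ/2]`. -/
theorem stmt8 {A : Type*} [AddCommGroup A] [Fintype A] [DecidableEq A]
    (χ : AddChar A ℂ) (S : Finset A) (hsym : ∀ a ∈ S, -a ∈ S)
    (ε : ℝ) (hε : 0 ≤ ε)
    (hbad : (((S ×ˢ S).filter fun p => p.1 + p.2 ∉ S).card : ℝ) ≤
      10 * ε * (S.card : ℝ) ^ 2)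
    (θ δ : ℝ) (hθ0 : 0 ≤ θ) (hθ : θ < Real.pi / 2)
    (hδ : Real.sqrt (10 * ε) < δ)
    (h1 : (1 - δ) * (S.card : ℝ) ≤
      ((S.filter fun x => |(χ x).arg| ≤ θ).card : ℝ)) :
    (1 - 3 * δ) * (S.card : ℝ) ≤
      ((S.filter fun x => |(χ x).arg| ≤ θ / 2).card : ℝ) := by
  classical
  by_contra hcon
  push_neg at hcon
  have hδ0 : 0 < δ := lt_of_le_of_lt (Real.sqrt_nonneg _) hδ
  have hεδ : 10 * ε < δ ^ 2 := by
    nlinarith [Real.sq_sqrt (by linarith : (0:ℝ) ≤ 10 * ε), Real.sqrt_nonneg (10 * ε)]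
  have hm0 : 0 < (S.card : ℝ) := by
    by_contra hm
    push_neg at hm
    have hz : (S.card : ℝ) = 0 := le_antisymm hm (by positivity)
    rw [hz, mul_zero] at hcon
    have : (0:ℝ) ≤ ((S.filter fun x => |(χ x).arg| ≤ θ / 2).card : ℝ) := by positivity
    linarith
  set Mp := S.filter (fun x => θ/2 < (χ x).arg ∧ |(χ x).arg| ≤ θ) with hMp
  set Mm := S.filter (fun x => (χ x).arg < -(θ/2) ∧ |(χ x).arg| ≤ θ) with hMm
  set Bp := S.filter (fun x => θ/2 < (χ x).arg) with hBp
  set Bm := S.filter (fun x => (χ x).arg < -(θ/2)) with hBm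
  set ST := S.filter (fun x => ¬ |(χ x).arg| ≤ θ) with hST
  set B := S.filter (fun x => ¬ |(χ x).arg| ≤ θ/2) with hBdef
  have hTST : (S.filter fun x => |(χ x).arg| ≤ θ).card + ST.card = S.card :=
    Finset.card_filter_add_card_filter_not _
  have hGB : (S.filter fun x => |(χ x).arg| ≤ θ/2).card + B.card = S.card :=
    Finset.card_filter_add_card_filter_not _
  -- B = Bp ∪ Bm, disjoint
  have hBun : B = Bp ∪ Bm := by
    ext x
    simp only [hBdef, hBp, hBm, Finset.mem_filter, Finset.mem_union, abs_le, not_and_or, not_le]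
    tauto
  have hBcard : B.card = Bp.card + Bm.card := by
    rw [hBun, Finset.card_union_of_disjoint]
    rw [Finset.disjoint_left]
    intro x hx1 hx2
    rw [hBp, Finset.mem_filter] at hx1
    rw [hBm, Finset.mem_filter] at hx2
    linarith [hx1.2, hx2.2]
  -- B ⊆ Mp ∪ Mm ∪ ST
  have hBsub : B.card ≤ Mp.card + Mm.card + ST.card := by
    have hsub : B ⊆ Mp ∪ Mm ∪ ST := by
      intro x hx
      rw [hBdef, Finset.mem_filter] at hx
      obtain ⟨hxS, hxa⟩ := hx
      rw [abs_le, not_and_or, not_le, not_le] at hxa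
      simp only [Finset.mem_union, hMp, hMm, hST, Finset.mem_filter]
      by_cases h : |(χ x).arg| ≤ θ
      · rcases hxa with h' | h'
        · exact Or.inl (Or.inr ⟨hxS, h', h⟩)
        · exact Or.inl (Or.inl ⟨hxS, h', h⟩)
      · exact Or.inr ⟨hxS, h⟩
    calc B.card ≤ (Mp ∪ Mm ∪ ST).card := Finset.card_le_card hsub
      _ ≤ (Mp ∪ Mm).card + ST.card := Finset.card_union_le _ _
      _ ≤ Mp.card + Mm.card + ST.card := by
          have := Finset.card_union_le Mp Mm; omega
  -- |Mp| = |Mm| via negation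
  have hMcard : Mp.card = Mm.card := by
    refine Finset.card_bij (fun x _ => -x) ?_ ?_ ?_
    · intro a ha
      rw [hMp, Finset.mem_filter] at ha
      obtain ⟨haS, h1', h2'⟩ := ha
      have hne : (χ a).arg ≠ π := by
        intro hpi
        rw [hpi, abs_of_pos Real.pi_pos] at h2'
        linarith [Real.pi_pos]
      rw [hMm, Finset.mem_filter, argneg χ a hne, abs_neg]
      exact ⟨hsym a haS, by linarith, h2'⟩
    · intro a _ b _ h
      exact neg_injective h
    · intro b hb
      rw [hMm, Finset.mem_filter] at hb
      obtain ⟨hbS, h1', h2'⟩ := hb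
      have hne : (χ b).arg ≠ π := by
        intro hpi
        rw [hpi] at h1'
        linarith [Real.pi_pos]
      refine ⟨-b, ?_, neg_neg b⟩
      rw [hMp, Finset.mem_filter, argneg χ b hne, abs_neg]
      exact ⟨hsym b hbS, by linarith, h2'⟩
  -- bad pairs
  set Pp := (Mp ×ˢ Bp).filter (fun p => p.1 + p.2 ∉ S) with hPp
  set Pm := (Mm ×ˢ Bm).filter (fun p => p.1 + p.2 ∉ S) with hPm
  -- counting on the plus side
  have hcountp : Mp.card * Bp.card ≤ Pp.card + Mp.card * ST.card := by
    have hsplit : ((Mp ×ˢ Bp).filter (fun p => p.1 + p.2 ∈ S)).card + Pp.card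
        = Mp.card * Bp.card := by
      rw [hPp, ← Finset.card_product]
      exact Finset.card_filter_add_card_filter_not _
    have hQ : ((Mp ×ˢ Bp).filter (fun p => p.1 + p.2 ∈ S)).card ≤ Mp.card * ST.card := by
      rw [← Finset.card_product]
      apply Finset.card_le_card_of_injOn (fun p => (p.1, p.1 + p.2))
      · intro p hp
        rw [Finset.mem_coe, Finset.mem_filter, Finset.mem_product] at hp
        obtain ⟨⟨hp1, hp2⟩, hp3⟩ := hp
        rw [Finset.mem_coe, Finset.mem_product]
        refine ⟨hp1, ?_⟩
        rw [hST, Finset.mem_filter]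
        refine ⟨hp3, not_le.2 ?_⟩
        rw [hMp, Finset.mem_filter] at hp1
        rw [hBp, Finset.mem_filter] at hp2
        have := arg_mul_gt hθ0 hθ (chi_ne χ p.1) (chi_ne χ p.2)
          hp1.2.1 ((abs_le.1 hp1.2.2).2) hp2.2
        rwa [← AddChar.map_add_eq_mul] at this
      · intro p _ q _ h
        rw [Prod.mk.injEq] at h
        obtain ⟨h1', h2'⟩ := h
        rw [h1'] at h2'
        exact Prod.ext h1' (add_left_cancel h2')
    omega
  -- counting on the minus side
  have hcountm : Mm.card * Bm.card ≤ Pm.card + Mm.card * ST.card := by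
    have hsplit : ((Mm ×ˢ Bm).filter (fun p => p.1 + p.2 ∈ S)).card + Pm.card
        = Mm.card * Bm.card := by
      rw [hPm, ← Finset.card_product]
      exact Finset.card_filter_add_card_filter_not _
    have hQ : ((Mm ×ˢ Bm).filter (fun p => p.1 + p.2 ∈ S)).card ≤ Mm.card * ST.card := by
      rw [← Finset.card_product]
      apply Finset.card_le_card_of_injOn (fun p => (p.1, p.1 + p.2))
      · intro p hp
        rw [Finset.mem_coe, Finset.mem_filter, Finset.mem_product] at hp
        obtain ⟨⟨hp1, hp2⟩, hp3⟩ := hp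
        rw [Finset.mem_coe, Finset.mem_product]
        refine ⟨hp1, ?_⟩
        rw [hST, Finset.mem_filter]
        refine ⟨hp3, not_le.2 ?_⟩
        rw [hMm, Finset.mem_filter] at hp1
        rw [hBm, Finset.mem_filter] at hp2
        have hne1 : (χ p.1).arg ≠ π := by
          intro hpi; rw [hpi] at hp1; linarith [Real.pi_pos, hp1.2.1]
        have hne2 : (χ p.2).arg ≠ π := by
          intro hpi; rw [hpi] at hp2; linarith [Real.pi_pos, hp2.2]
        have e1 : ((χ p.1)⁻¹).arg = -((χ p.1).arg) := by
          rw [Complex.arg_inv, if_neg hne1]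
        have e2 : ((χ p.2)⁻¹).arg = -((χ p.2).arg) := by
          rw [Complex.arg_inv, if_neg hne2]
        have h := arg_mul_gt hθ0 hθ (inv_ne_zero (chi_ne χ p.1)) (inv_ne_zero (chi_ne χ p.2))
          (by rw [e1]; linarith [hp1.2.1]) (by rw [e1]; linarith [(abs_le.1 hp1.2.2).1])
          (by rw [e2]; linarith [hp2.2])
        rw [← mul_inv, Complex.abs_arg_inv, ← AddChar.map_add_eq_mul] at h
        exact h
      · intro p _ q _ h
        rw [Prod.mk.injEq] at h
        obtain ⟨h1', h2'⟩ := h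
        rw [h1'] at h2'
        exact Prod.ext h1' (add_left_cancel h2')
    omega
  -- Pp, Pm disjoint subsets of the bad-pair set
  have hPP : Pp.card + Pm.card ≤ ((S ×ˢ S).filter fun p => p.1 + p.2 ∉ S).card := by
    have hdis : Disjoint Pp Pm := by
      rw [Finset.disjoint_left]
      intro p hp1 hp2
      rw [hPp, Finset.mem_filter, Finset.mem_product] at hp1
      rw [hPm, Finset.mem_filter, Finset.mem_product] at hp2
      have a1 := hp1.1.1; have a2 := hp2.1.1
      rw [hMp, Finset.mem_filter] at a1
      rw [hMm, Finset.mem_filter] at a2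
      linarith [a1.2.1, a2.2.1]
    rw [← Finset.card_union_of_disjoint hdis]
    apply Finset.card_le_card
    intro p hp
    rcases Finset.mem_union.1 hp with h | h
    · rw [hPp, Finset.mem_filter, Finset.mem_product] at h
      rw [Finset.mem_filter, Finset.mem_product]
      exact ⟨⟨Finset.filter_subset _ _ h.1.1, Finset.filter_subset _ _ h.1.2⟩, h.2⟩
    · rw [hPm, Finset.mem_filter, Finset.mem_product] at h
      rw [Finset.mem_filter, Finset.mem_product]
      exact ⟨⟨Finset.filter_subset _ _ h.1.1, Finset.filter_subset _ _ h.1.2⟩, h.2⟩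
  -- now pass to the reals
  have rTST : ((S.filter fun x => |(χ x).arg| ≤ θ).card : ℝ) + ST.card = S.card := by
    exact_mod_cast hTST
  have rGB : ((S.filter fun x => |(χ x).arg| ≤ θ/2).card : ℝ) + B.card = S.card := by
    exact_mod_cast hGB
  have rBcard : (B.card : ℝ) = Bp.card + Bm.card := by exact_mod_cast hBcard
  have rBsub : (B.card : ℝ) ≤ 2 * Mp.card + ST.card := by
    have : (B.card : ℝ) ≤ (Mp.card : ℝ) + Mm.card + ST.card := by exact_mod_cast hBsub
    have hmm : (Mm.card : ℝ) = Mp.card := by exact_mod_cast hMcard.symm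
    linarith
  have rcountp : (Mp.card : ℝ) * Bp.card ≤ Pp.card + (Mp.card : ℝ) * ST.card := by
    exact_mod_cast hcountp
  have rcountm : (Mp.card : ℝ) * Bm.card ≤ Pm.card + (Mp.card : ℝ) * ST.card := by
    rw [hMcard]; exact_mod_cast hcountm
  have rPP : (Pp.card : ℝ) + Pm.card ≤ 10 * ε * (S.card : ℝ) ^ 2 := by
    have : ((Pp.card + Pm.card : ℕ) : ℝ) ≤ (((S ×ˢ S).filter fun p => p.1 + p.2 ∉ S).card : ℝ) := by
      exact_mod_cast hPP
    push_cast at this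
    linarith
  -- abbreviations
  have hst : (ST.card : ℝ) ≤ δ * S.card := by linarith
  have hbb : 3 * (δ * S.card) < (B.card : ℝ) := by linarith
  have hu : δ * (S.card : ℝ) < Mp.card := by linarith
  have hu0 : (0:ℝ) ≤ Mp.card := by positivity
  have hust : (Mp.card : ℝ) * ST.card ≤ (Mp.card : ℝ) * (δ * S.card) :=
    mul_le_mul_of_nonneg_left hst hu0
  have hubb : (Mp.card : ℝ) * B.card ≤ 10 * ε * (S.card : ℝ) ^ 2
      + 2 * ((Mp.card : ℝ) * (δ * S.card)) := by
    have : (Mp.card : ℝ) * B.card = (Mp.card : ℝ) * Bp.card + (Mp.card : ℝ) * Bm.card := by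
      rw [rBcard]; ring
    linarith
  have hδm : (0:ℝ) < δ * S.card := by positivity
  have hε2 : 10 * ε * (S.card : ℝ) ^ 2 < δ ^ 2 * (S.card : ℝ) ^ 2 :=
    mul_lt_mul_of_pos_right hεδ (pow_pos hm0 2)
  nlinarith [mul_pos (sub_pos.2 hu) (by linarith : (0:ℝ) < (B.card : ℝ) - 3 * (δ * S.card)),
    mul_pos hδm (sub_pos.2 hu),
    mul_pos hδm (by linarith : (0:ℝ) < (B.card : ℝ) - 3 * (δ * S.card))]
end

section
/- Let G be a finite abelian group, χ a character of G, and S ⊆ G a subset. For x ∈ S write χ(x) = e^{iθ_x}, θ_x ∈ [-π,π). Suppose 0 ≤ θ < π/2 and at least (3/4)|S| elements x ∈ S have θ_x ∈ [-θ,θ]. Then every x ∈ S with θ_x ∉ [-2θ, 2θ] satisfies Pr_{y∈S}[x+y ∈ S] ≤ 1/2. -/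
lemma stmt9_aux {a b c θ : ℝ} (hθ0 : 0 ≤ θ) (hθ : θ < Real.pi / 2)
    (ha1 : -Real.pi < a) (ha2 : a ≤ Real.pi)
    (hc1 : -Real.pi < c) (hc2 : c ≤ Real.pi)
    (hb : |b| ≤ θ) (ha : 2 * θ < |a|)
    (hk : ∃ k : ℤ, a + b - c = 2 * Real.pi * k) : θ < |c| := by
  obtain ⟨k, hkk⟩ := hk
  have hπ : 0 < Real.pi := Real.pi_pos
  have hb1 : -θ ≤ b := neg_le_of_abs_le hb
  have hb2 : b ≤ θ := le_of_abs_le hb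
  have ha1' : -Real.pi ≤ a := le_of_lt ha1
  have habs : |a + b - c| < 2 * Real.pi + Real.pi := by
    have h2 : |c| ≤ Real.pi := abs_le.2 ⟨le_of_lt hc1, hc2⟩
    have h1 : |a + b| ≤ Real.pi + θ := by
      rw [abs_le]; constructor <;> linarith
    calc |a + b - c| ≤ |a + b| + |c| := abs_sub _ _
      _ < 2 * Real.pi + Real.pi := by nlinarith
  have hkr : |(k : ℝ)| < 3 / 2 := by
    rw [hkk, abs_mul, abs_of_pos (by linarith : (0:ℝ) < 2 * Real.pi)] at habs
    nlinarith
  have hkz : -1 ≤ k ∧ k ≤ 1 := by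
    constructor <;> by_contra h <;> push_neg at h
    · have : (k : ℝ) ≤ -2 := by exact_mod_cast (by omega : k ≤ -2)
      rw [abs_lt] at hkr; linarith
    · have : (2 : ℝ) ≤ (k : ℝ) := by exact_mod_cast (by omega : 2 ≤ k)
      rw [abs_lt] at hkr; linarith
  obtain ⟨hk1, hk2⟩ := hkz
  rw [abs_lt] at hkr
  interval_cases k
  ·
    push_cast at hkk
    -- a + b - c = -2π, c = a + b + 2π ; c ≤ π ⇒ a+b ≤ -π ; a+b > -π - θ ⇒ c > π - θ > θ
    have h1 : Real.pi - θ < c := by linarith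
    have : θ < c := by linarith
    calc θ < c := this
      _ ≤ |c| := le_abs_self c
  · push_cast at hkk
    have hc : c = a + b := by linarith
    rcases abs_cases a with ⟨h, h'⟩ | ⟨h, h'⟩
    · have : θ < c := by rw [hc]; linarith
      linarith [le_abs_self c]
    · have : c < -θ := by rw [hc]; linarith
      calc θ < -c := by linarith
        _ ≤ |c| := neg_le_abs c
  · push_cast at hkk
    -- a + b - c = 2π, c = a + b - 2π; c > -π ⇒ a+b > π, a+b ≤ π+θ ⇒ c ≤ -π+θ < -θ
    have h1 : c ≤ -Real.pi + θ := by linarith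
    have : c < -θ := by linarith
    calc θ < -c := by linarith
      _ ≤ |c| := neg_le_abs c

/-- Let `A` be a finite abelian group, `χ` a character of `A`, and `S ⊆ A`.
Writing `θ_x` for the complex argument of `χ(x)`, suppose `0 ≤ θ < π/2` and at
least `(3/4)|S|` elements `x ∈ S` have `θ_x ∈ [-θ, θ]`. Then every `x ∈ S` with
`θ_x ∉ [-2θ, 2θ]` satisfies `Pr_{y∈S}[x+y ∈ S] ≤ 1/2`. -/
theorem stmt9 {A : Type*} [AddCommGroup A] [Fintype A] [DecidableEq A]
    (χ : AddChar A ℂ) (S : Finset A)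
    (θ : ℝ) (hθ0 : 0 ≤ θ) (hθ : θ < Real.pi / 2)
    (h34 : (3 / 4 : ℝ) * (S.card : ℝ) ≤
      ((S.filter fun x => |(χ x).arg| ≤ θ).card : ℝ)) :
    ∀ x ∈ S, ¬ (|(χ x).arg| ≤ 2 * θ) →
      ((S.filter fun y => x + y ∈ S).card : ℝ) ≤ (S.card : ℝ) / 2 := by
  intro x hxS hxarg
  push_neg at hxarg
  set T := S.filter fun x => |(χ x).arg| ≤ θ with hT
  set B := S.filter fun y => x + y ∈ S with hB
  have hχne : ∀ a : A, χ a ≠ 0 := fun a => by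
    intro h
    have : χ a * χ (-a) = 1 := by rw [← AddChar.map_add_eq_mul]; simp
    rw [h, zero_mul] at this; exact one_ne_zero this.symm
  -- key: y ∈ T, x + y ∈ S ⇒ x + y ∉ T
  have key : ∀ y ∈ T, x + y ∈ S → x + y ∈ S \ T := by
    intro y hyT hxyS
    rw [Finset.mem_sdiff]
    refine ⟨hxyS, ?_⟩
    rw [hT, Finset.mem_filter]
    rintro ⟨-, habs⟩
    rw [hT, Finset.mem_filter] at hyT
    have hmul : ((χ (x + y)).arg : Real.Angle) = (χ x).arg + (χ y).arg := by
      rw [AddChar.map_add_eq_mul]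
      exact Complex.arg_mul_coe_angle (hχne x) (hχne y)
    have hdvd : ∃ k : ℤ, (χ x).arg + (χ y).arg - (χ (x+y)).arg = 2 * Real.pi * k := by
      rw [← Real.Angle.coe_add] at hmul
      obtain ⟨k, hk⟩ := Real.Angle.angle_eq_iff_two_pi_dvd_sub.mp hmul.symm
      exact ⟨k, hk⟩
    have := stmt9_aux hθ0 hθ (Complex.neg_pi_lt_arg (χ x)) (Complex.arg_le_pi (χ x))
      (Complex.neg_pi_lt_arg (χ (x+y))) (Complex.arg_le_pi (χ (x+y)))
      hyT.2 hxarg hdvd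
    linarith
  -- |B ∩ T| ≤ |S \ T|
  have h1 : (B ∩ T).card ≤ (S \ T).card := by
    apply Finset.card_le_card_of_injOn (fun y => x + y)
    · intro y hy
      rw [Finset.mem_coe, Finset.mem_inter] at hy
      have hyB := hy.1
      rw [hB, Finset.mem_filter] at hyB
      exact key y hy.2 hyB.2
    · intro a _ b _ h
      exact add_left_cancel h
  have hBS : B ⊆ S := Finset.filter_subset _ _
  have hTS : T ⊆ S := Finset.filter_subset _ _
  have h2 : (B \ T).card ≤ (S \ T).card :=
    Finset.card_le_card (Finset.sdiff_subset_sdiff hBS (le_refl _))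
  have h3 : (B ∩ T).card + (B \ T).card = B.card := Finset.card_inter_add_card_sdiff B T
  have h4 : (S \ T).card = S.card - T.card := Finset.card_sdiff_of_subset hTS
  have h5 : ((S \ T).card : ℝ) ≤ (S.card : ℝ) / 4 := by
    rw [h4]
    rw [Nat.cast_sub (Finset.card_le_card hTS)]
    linarith
  have h6 : (B.card : ℝ) ≤ ((B ∩ T).card : ℝ) + ((B \ T).card : ℝ) := by
    rw [← Nat.cast_add, h3]
  have h7 : ((B ∩ T).card : ℝ) ≤ (S.card : ℝ) / 4 := le_trans (by exact_mod_cast h1) h5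
  have h8 : ((B \ T).card : ℝ) ≤ (S.card : ℝ) / 4 := le_trans (by exact_mod_cast h2) h5
  linarith
end

section
/- For every r ∈ ℕ and every x, y ∈ ℕ with x even, x ≤ r, and 0 ≤ y - (x²+2x)/8 ≤ binom(x/2, 2) - 5(x/2)^{3/2}, there exists an (r, binom(r,2) - rx/2 + y)-triangle-regular graph, given as the Cartesian product of a clique on r - x/2 + 1 vertices with a degree-(x/2) triangle-regular graph. -/
open SimpleGraph

namespace Nat

lemma choose_two_succ (n : ℕ) : (n + 1).choose 2 = n.choose 2 + n := by
  simp [Nat.choose_succ_succ, add_comm]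

lemma exists_choose_two_le_lt (k : ℕ) : ∃ a, a.choose 2 ≤ k ∧ k < a.choose 2 + a := by
  induction k with
  | zero => exact ⟨1, by simp⟩
  | succ k ih =>
    obtain ⟨a, hle, hlt⟩ := ih
    by_cases h : k + 1 < a.choose 2 + a
    · exact ⟨a, by omega, h⟩
    · exact ⟨a + 1, by rw [choose_two_succ]; omega, by rw [choose_two_succ]; omega⟩

lemma add_five_mul_sqrt_le {a d : ℕ} (hd : 0 < d)
    (h : a.choose 2 + 5 * d * d.sqrt ≤ d.choose 2) : a + 5 * d.sqrt ≤ d := by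
  have hQ : (a : ℚ) * (a - 1) / 2 + 5 * d * d.sqrt ≤ d * (d - 1) / 2 := by
    simpa [Nat.cast_choose_two] using (Nat.cast_le (α := ℚ)).mpr h
  have hsQ : (1 : ℚ) ≤ d.sqrt := by exact_mod_cast Nat.sqrt_pos.mpr hd
  have hdQ : (1 : ℚ) ≤ d := by exact_mod_cast hd
  by_contra! hlt
  have hltQ : (d : ℚ) + 1 ≤ a + 5 * d.sqrt := by exact_mod_cast hlt
  rcases le_or_gt a d with had | had
  · have hadQ : (a : ℚ) ≤ d := by exact_mod_cast had
    nlinarith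
  · have hadQ : (d : ℚ) + 1 ≤ a := by exact_mod_cast had
    nlinarith

lemma le_two_mul_sqrt {b d : ℕ} (h : b.choose 2 < d) : b ≤ 2 * d.sqrt := by
  have hQ : (b : ℚ) * (b - 1) / 2 + 1 ≤ d := by
    simpa [Nat.cast_choose_two] using (Nat.cast_le (α := ℚ)).mpr h
  have hdQ : (d : ℚ) + 1 ≤ (d.sqrt + 1) * (d.sqrt + 1) := by
    exact_mod_cast Nat.lt_succ_sqrt d
  by_contra! hlt
  have hltQ : 2 * (d.sqrt : ℚ) + 1 ≤ b := by exact_mod_cast hlt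
  nlinarith [mul_nonneg (sub_nonneg.2 hltQ) (by positivity : (0 : ℚ) ≤ b + 2 * d.sqrt),
    sq_nonneg ((d.sqrt : ℚ) - 1)]

lemma exists_choose_two_decomposition {d k : ℕ} (h : k + 5 * d * d.sqrt ≤ d.choose 2) :
    ∃ a b j t, a + b + 3 * j + 2 * t ≤ d ∧ a.choose 2 + b.choose 2 + 3 * j + t = k := by
  rcases Nat.eq_zero_or_pos k with rfl | hk
  · exact ⟨0, 0, 0, 0, by simp⟩
  have hd : 0 < d := Nat.pos_of_ne_zero (by rintro rfl; simp at h; omega)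
  obtain ⟨a, ha, ha'⟩ := exists_choose_two_le_lt k
  obtain ⟨b, hb, hb'⟩ := exists_choose_two_le_lt (k - a.choose 2)
  have had : a + 5 * d.sqrt ≤ d := add_five_mul_sqrt_le hd (by omega)
  have hbd : b ≤ 2 * d.sqrt := le_two_mul_sqrt (by omega)
  have hs : 1 ≤ d.sqrt := Nat.sqrt_pos.mpr hd
  set rest := k - a.choose 2 - b.choose 2
  exact ⟨a, b, rest / 3, rest % 3, by omega, by omega⟩

lemma choose_two_sub_add_mul {r d : ℕ} (hdr : d ≤ r) :
    (r - d).choose 2 + r * d = r.choose 2 + (d + 1).choose 2 := by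
  obtain ⟨n, rfl⟩ := Nat.exists_eq_add_of_le hdr
  rw [Nat.add_sub_cancel_left]
  have : ((n.choose 2 + (d + n) * d : ℕ) : ℚ) = ((d + n).choose 2 + (d + 1).choose 2 : ℕ) := by
    push_cast [Nat.cast_choose_two]
    ring
  exact_mod_cast this

end Nat

lemma natCast_mul_sqrt_le_rpow (d : ℕ) : ((d * d.sqrt : ℕ) : ℝ) ≤ (d : ℝ) ^ ((3 : ℝ) / 2) := by
  rw [show (3 : ℝ) / 2 = 1 + 1 / 2 by norm_num, Real.rpow_add' (Nat.cast_nonneg d) (by norm_num),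
    Real.rpow_one, ← Real.sqrt_eq_rpow, Nat.cast_mul]
  exact mul_le_mul_of_nonneg_left Real.nat_sqrt_le_real_sqrt (Nat.cast_nonneg d)

namespace SimpleGraph

variable {V W : Type*}

def linkDarts (G : SimpleGraph V) (v : V) : Set (V × V) :=
  {p | G.Adj v p.1 ∧ G.Adj v p.2 ∧ G.Adj p.1 p.2}

lemma linkDarts_top (v : V) : (⊤ : SimpleGraph V).linkDarts v = ({v}ᶜ : Set V).offDiag := by
  ext ⟨a, b⟩
  simp [linkDarts, Set.mem_offDiag, ne_comm]

lemma linkDarts_boxProd (G : SimpleGraph V) (H : SimpleGraph W) (x : V × W) :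
    (G □ H).linkDarts x =
      (fun q : V × V => ((q.1, x.2), (q.2, x.2))) '' G.linkDarts x.1 ∪
        (fun q : W × W => ((x.1, q.1), (x.1, q.2))) '' H.linkDarts x.2 := by
  ext ⟨⟨a₁, b₁⟩, ⟨a₂, b₂⟩⟩
  simp only [linkDarts, boxProd_adj, Set.mem_union, Set.mem_image, Set.mem_ofPred_eq,
    Prod.mk.injEq, Prod.exists]
  grind [SimpleGraph.irrefl]

lemma ncard_neighborSet_boxProd [Finite V] [Finite W] (G : SimpleGraph V) (H : SimpleGraph W)
    (x : V × W) :
    ((G □ H).neighborSet x).ncard = (G.neighborSet x.1).ncard + (H.neighborSet x.2).ncard := by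
  rw [neighborSet_boxProd, Set.ncard_union_eq, Set.ncard_prod, Set.ncard_prod,
    Set.ncard_singleton, Set.ncard_singleton, mul_one, one_mul]
  exact Set.disjoint_prod.mpr <| .inl <| Set.disjoint_singleton_right.mpr G.notMem_neighborSet_self

end SimpleGraph

section TriangleRegular

variable {V W : Type*}

lemma isTriangleRegular_iff_ncard {G : SimpleGraph V} {r c : ℕ} :
    IsTriangleRegular G r c ↔
      (∀ v, (G.neighborSet v).ncard = r) ∧ ∀ v, (G.linkDarts v).ncard = 2 * c := by
  simp only [IsTriangleRegular, ← Nat.card_coe_set_eq]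
  rfl

lemma isTriangleRegular_top [Fintype V] {m : ℕ} (hV : Fintype.card V = m + 1) :
    IsTriangleRegular (⊤ : SimpleGraph V) m (m.choose 2) := by
  classical
  refine isTriangleRegular_iff_ncard.mpr ⟨fun v => ?_, fun v => ?_⟩
  · rw [neighborSet_top, Set.ncard_compl, Set.ncard_singleton, Nat.card_eq_fintype_card, hV]
    simp
  · rw [linkDarts_top, ← Finset.coe_singleton, ← Finset.coe_compl, ← Finset.coe_offDiag,
      Set.ncard_coe_finset, Finset.offDiag_card, Finset.card_compl, Finset.card_singleton, hV,
      Nat.add_sub_cancel, Nat.choose_two_right,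
      Nat.mul_div_cancel' (Nat.even_mul_pred_self m).two_dvd]
    exact (Nat.mul_sub_one m m).symm

theorem IsTriangleRegular.boxProd [Finite V] [Finite W] {G : SimpleGraph V} {H : SimpleGraph W}
    {r₁ c₁ r₂ c₂ : ℕ} (hG : IsTriangleRegular G r₁ c₁) (hH : IsTriangleRegular H r₂ c₂) :
    IsTriangleRegular (G □ H) (r₁ + r₂) (c₁ + c₂) := by
  rw [isTriangleRegular_iff_ncard] at *
  refine ⟨fun x => ?_, fun x => ?_⟩
  · rw [ncard_neighborSet_boxProd, hG.1, hH.1]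
  · have hdisj : Disjoint ((fun q : V × V => ((q.1, x.2), (q.2, x.2))) '' G.linkDarts x.1)
        ((fun q : W × W => ((x.1, q.1), (x.1, q.2))) '' H.linkDarts x.2) := by
      refine Set.disjoint_left.mpr ?_
      rintro _ ⟨p, hp, rfl⟩ ⟨q, -, hpq⟩
      exact hp.1.ne (congrArg (·.1.1) hpq)
    rw [linkDarts_boxProd, Set.ncard_union_eq hdisj,
      Set.ncard_image_of_injective _ fun p q h => Prod.ext (congrArg (·.1.1) h) (congrArg (·.2.1) h),
      Set.ncard_image_of_injective _ fun p q h => Prod.ext (congrArg (·.1.2) h) (congrArg (·.2.2) h),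
      hG.2, hH.2, mul_add]

end TriangleRegular

def ExistsTriangleRegular (r c : ℕ) : Prop :=
  ∃ (V : Type) (_ : Fintype V) (_ : Nonempty V) (G : SimpleGraph V), IsTriangleRegular G r c

namespace ExistsTriangleRegular

lemma clique (m : ℕ) : ExistsTriangleRegular m (m.choose 2) :=
  ⟨Fin (m + 1), inferInstance, inferInstance, ⊤, isTriangleRegular_top (Fintype.card_fin _)⟩

lemma boxProd {r₁ c₁ r₂ c₂ : ℕ} (h₁ : ExistsTriangleRegular r₁ c₁)
    (h₂ : ExistsTriangleRegular r₂ c₂) : ExistsTriangleRegular (r₁ + r₂) (c₁ + c₂) := by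
  obtain ⟨V, _, _, G, hG⟩ := h₁
  obtain ⟨W, _, _, H, hH⟩ := h₂
  exact ⟨V × W, inferInstance, inferInstance, G □ H, hG.boxProd hH⟩

lemma nsmul {r c : ℕ} (h : ExistsTriangleRegular r c) (n : ℕ) :
    ExistsTriangleRegular (n * r) (n * c) := by
  induction n with
  | zero => simpa using clique 0
  | succ n ih => simpa [add_mul] using ih.boxProd h

lemma add_degree {r c : ℕ} (h : ExistsTriangleRegular r c) (n : ℕ) :
    ExistsTriangleRegular (r + n) c := by
  simpa using h.boxProd ((clique 1).nsmul n)

lemma of_add_five_mul_sqrt_le {d k : ℕ} (h : k + 5 * d * d.sqrt ≤ d.choose 2) :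
    ExistsTriangleRegular d k := by
  obtain ⟨a, b, j, t, hd, rfl⟩ := Nat.exists_choose_two_decomposition h
  have h₄ : ExistsTriangleRegular (j * 3) (j * 3) := (clique 3).nsmul j
  have h₃ : ExistsTriangleRegular (t * 2) (t * 1) := (clique 2).nsmul t
  have := ((((clique a).boxProd (clique b)).boxProd h₄).boxProd h₃).add_degree
    (d - (a + b + 3 * j + 2 * t))
  convert this using 1 <;> omega

theorem of_le_choose_two_sub {d k : ℕ}
    (h : (k : ℝ) ≤ d.choose 2 - 5 * (d : ℝ) ^ ((3 : ℝ) / 2)) : ExistsTriangleRegular d k := by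
  refine of_add_five_mul_sqrt_le ?_
  have hsqrt := natCast_mul_sqrt_le_rpow d
  rw [mul_assoc, ← Nat.cast_le (α := ℝ)]
  push_cast at hsqrt ⊢
  linarith

end ExistsTriangleRegular

/-- For every `r ∈ ℕ` and every `x, y ∈ ℕ` with `x` even, `x ≤ r`, and
`0 ≤ y - (x²+2x)/8 ≤ binom(x/2, 2) - 5(x/2)^{3/2}`, there exists an
`(r, binom(r,2) - rx/2 + y)`-triangle-regular graph. -/
theorem stmt11 (r x y : ℕ) (hx : Even x) (hxr : x ≤ r)
    (hy1 : ((x : ℝ) ^ 2 + 2 * (x : ℝ)) / 8 ≤ (y : ℝ))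
    (hy2 : (y : ℝ) - ((x : ℝ) ^ 2 + 2 * (x : ℝ)) / 8 ≤
      ((x / 2).choose 2 : ℝ) - 5 * ((x : ℝ) / 2) ^ ((3 : ℝ) / 2)) :
    ∃ c : ℕ, (c : ℤ) = (r.choose 2 : ℤ) - (r : ℤ) * (x : ℤ) / 2 + (y : ℤ) ∧
      ∃ (V : Type) (_ : Fintype V) (_ : Nonempty V) (G : SimpleGraph V),
        IsTriangleRegular G r c := by
  obtain ⟨d, rfl⟩ := hx
  have hdr : d ≤ r := by omega
  have hC : (((d + d : ℕ) : ℝ) ^ 2 + 2 * (d + d : ℕ)) / 8 = ((d + 1).choose 2 : ℕ) := by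
    push_cast [Nat.cast_choose_two]
    ring
  have hy : (d + 1).choose 2 ≤ y := by exact_mod_cast hC ▸ hy1
  have hk : ((y - (d + 1).choose 2 : ℕ) : ℝ) ≤ d.choose 2 - 5 * (d : ℝ) ^ ((3 : ℝ) / 2) := by
    have hd : ((d + d : ℕ) : ℝ) / 2 = d := by push_cast; ring
    rwa [hC, hd, show (d + d) / 2 = d by omega, ← Nat.cast_sub hy] at hy2
  refine ⟨(r - d).choose 2 + (y - (d + 1).choose 2), ?_, ?_⟩
  · have hrd : (r : ℤ) * (d + d : ℕ) / 2 = r * d := by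
      push_cast
      rw [← mul_two, ← mul_assoc, Int.mul_ediv_cancel _ two_ne_zero]
    have := congrArg (Nat.cast : ℕ → ℤ) (Nat.choose_two_sub_add_mul hdr)
    push_cast at this
    rw [hrd]
    push_cast [Nat.cast_sub hy]
    linear_combination this
  · have := (ExistsTriangleRegular.clique (r - d)).boxProd (.of_le_choose_two_sub hk)
    rwa [Nat.sub_add_cancel hdr] at this
end

section
/- Let G be an abelian group, H ≤ G a finite subgroup, S a finite symmetric subset of G, r = |S|, α = |S \ H|, and suppose |H ∩ S| = r - α and |H| = r + β with β ≥ 0 and α + β ≥ 0. Then the number of ordered pairs (a,b) ∈ (H∩S)×(H∩S) with a+b ∈ S is at least (r-α)² - (α+β)(r+β) and at most (r-α)² - (α+β)(r+β) + 2(α+β)². -/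
/-!
Work inside the finite group `H`, with `K = H ∩ S` and its complement `D = H \ S`, of size
`α + β`. A pair of `K × K` has its sum outside `S` exactly when the sum lies in `D`, so the count
is `|K|² - N` with `N` the number of pairs of `K × K` summing into `D`. Translations are
bijections of `H`, so exactly `|H| |D|` pairs of `H × H` sum into `D`, and at most `|D|²` of
them have their first coordinate in `D`, and at most `|D|²` their second. Hence
`|H| |D| - 2 |D|² ≤ N ≤ |H| |D|`.
-/

open Finset

section
variable {G : Type*} [AddGroup G] [Fintype G] [DecidableEq G]

theorem card_filter_product_univ_add_mem (X Y : Finset G) :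
    #{p ∈ X ×ˢ univ | p.1 + p.2 ∈ Y} = #X * #Y := by
  rw [← card_product]
  refine card_nbij' (fun p ↦ (p.1, p.1 + p.2)) (fun q ↦ (q.1, -q.1 + q.2)) ?_ ?_ ?_ ?_ <;>
    intro p hp <;> simp_all

theorem card_filter_univ_product_add_mem (X Y : Finset G) :
    #{p ∈ univ ×ˢ X | p.1 + p.2 ∈ Y} = #X * #Y := by
  rw [← card_product]
  refine card_nbij' (fun p ↦ (p.2, p.1 + p.2)) (fun q ↦ (q.2 - q.1, q.1)) ?_ ?_ ?_ ?_ <;>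
    intro p hp <;> simp_all

theorem card_mul_card_compl_eq (K : Finset G) :
    Fintype.card G * #Kᶜ = #{p ∈ K ×ˢ K | p.1 + p.2 ∉ K} +
      #{p ∈ K ×ˢ Kᶜ | p.1 + p.2 ∉ K} + #Kᶜ * #Kᶜ := by
  have hsplit : (univ : Finset G) ×ˢ univ = (K ×ˢ K ∪ K ×ˢ Kᶜ) ∪ Kᶜ ×ˢ univ := by
    rw [← product_union, union_compl, ← union_product, union_compl]
  have hK : Disjoint K Kᶜ := disjoint_compl_right
  rw [← card_univ, ← card_filter_product_univ_add_mem univ, hsplit, filter_union, filter_union,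
    card_union_of_disjoint, card_union_of_disjoint, card_filter_product_univ_add_mem]
  · simp only [mem_compl]
  · exact disjoint_filter_filter (disjoint_product.2 (Or.inr hK))
  · exact disjoint_union_left.2 ⟨disjoint_filter_filter (disjoint_product.2 (Or.inl hK)),
      disjoint_filter_filter (disjoint_product.2 (Or.inl hK))⟩

theorem card_filter_product_compl_add_notMem_le (K : Finset G) :
    #{p ∈ K ×ˢ Kᶜ | p.1 + p.2 ∉ K} ≤ #Kᶜ * #Kᶜ := by
  rw [← card_filter_univ_product_add_mem]
  refine card_le_card fun p ↦ ?_
  simp +contextual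

theorem card_filter_product_add_mem_bounds (K : Finset G) :
    (#K : ℤ) ^ 2 - Fintype.card G * #Kᶜ ≤ #{p ∈ K ×ˢ K | p.1 + p.2 ∈ K} ∧
      (#{p ∈ K ×ˢ K | p.1 + p.2 ∈ K} : ℤ) ≤
        (#K : ℤ) ^ 2 - Fintype.card G * #Kᶜ + 2 * (#Kᶜ : ℤ) ^ 2 := by
  have hsum := card_filter_add_card_filter_not (s := K ×ˢ K) (fun p ↦ p.1 + p.2 ∈ K)
  have hdecomp := card_mul_card_compl_eq K
  have hmixed := card_filter_product_compl_add_notMem_le K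
  rw [card_product] at hsum
  constructor <;> push_cast [sq] <;> zify at hsum hdecomp hmixed <;> linarith
end

theorem ncard_inter_eq_card {A : Type*} [AddGroup A] (H : AddSubgroup A) (S : Set A)
    (K : Finset H) (hK : ∀ x : H, x ∈ K ↔ (x : A) ∈ S) :
    ((H : Set A) ∩ S).ncard = #K := by
  rw [← Subtype.image_preimage_coe, Set.ncard_image_of_injective _ Subtype.val_injective,
    ← Set.ncard_coe_finset]
  congr 1
  ext x
  simp [hK]

theorem ncard_pairs_add_mem_eq_card {A : Type*} [AddGroup A] (H : AddSubgroup A) (S : Set A)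
    [DecidableEq H] (K : Finset H) (hK : ∀ x : H, x ∈ K ↔ (x : A) ∈ S) :
    {p : A × A | p.1 ∈ (H : Set A) ∩ S ∧ p.2 ∈ (H : Set A) ∩ S ∧ p.1 + p.2 ∈ S}.ncard =
      #{p ∈ K ×ˢ K | p.1 + p.2 ∈ K} := by
  have hinj : Function.Injective (Prod.map ((↑) : H → A) ((↑) : H → A)) :=
    Subtype.val_injective.prodMap Subtype.val_injective
  rw [← Set.ncard_coe_finset, ← Set.ncard_image_of_injective _ hinj]
  congr 1
  ext ⟨a, b⟩
  simp only [Set.mem_ofPred_eq, Set.mem_inter_iff, coe_filter, mem_product, hK, Set.mem_image,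
    Prod.exists, Prod.map_apply, Prod.mk.injEq]
  constructor
  · rintro ⟨⟨ha, haS⟩, ⟨hb, hbS⟩, habS⟩
    exact ⟨⟨a, ha⟩, ⟨b, hb⟩, ⟨⟨haS, hbS⟩, habS⟩, rfl, rfl⟩
  · rintro ⟨x, y, ⟨⟨hxS, hyS⟩, hxyS⟩, rfl, rfl⟩
    exact ⟨⟨x.2, hxS⟩, ⟨y.2, hyS⟩, hxyS⟩

theorem stmt13_general {A : Type*} [AddCommGroup A] (H : AddSubgroup A) (S : Set A)
    (hfin : S.Finite) (r α β : ℕ)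
    (hcap : (((H : Set A) ∩ S).ncard : ℤ) = (r : ℤ) - (α : ℤ))
    (hH : Nat.card H = r + β) :
    ((r : ℤ) - α) ^ 2 - ((α : ℤ) + β) * ((r : ℤ) + β) ≤
      ({p : A × A | p.1 ∈ (H : Set A) ∩ S ∧ p.2 ∈ (H : Set A) ∩ S ∧
        p.1 + p.2 ∈ S}.ncard : ℤ) ∧
    ({p : A × A | p.1 ∈ (H : Set A) ∩ S ∧ p.2 ∈ (H : Set A) ∩ S ∧
        p.1 + p.2 ∈ S}.ncard : ℤ) ≤
      ((r : ℤ) - α) ^ 2 - ((α : ℤ) + β) * ((r : ℤ) + β) + 2 * ((α : ℤ) + β) ^ 2 := by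
  classical
  rcases (H : Set A).finite_or_infinite with hHfin | hHinf
  · have : Fintype H := @Fintype.ofFinite H hHfin.to_subtype
    set K : Finset H := {x | (x : A) ∈ S}
    have hK : ∀ x : H, x ∈ K ↔ (x : A) ∈ S := fun x ↦ by simp [K]
    have hKcard : (#K : ℤ) = r - α := by rw [← hcap, ncard_inter_eq_card H S K hK]
    have hGcard : Fintype.card H = r + β := by rw [← Nat.card_eq_fintype_card, hH]
    have hKcompl : (#Kᶜ : ℤ) = α + β := by
      rw [card_compl, Nat.cast_sub (card_le_univ K), hGcard, hKcard]
      push_cast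
      ring
    rw [ncard_pairs_add_mem_eq_card H S K hK]
    have hbounds := card_filter_product_add_mem_bounds K
    rw [hKcard, hKcompl, hGcard] at hbounds
    push_cast at hbounds
    constructor <;> linarith [hbounds.1, hbounds.2]
  · -- `Nat.card` of an infinite type is `0`, so `hH` forces `r = β = 0`.
    have : Infinite H := hHinf.to_subtype
    obtain ⟨rfl, rfl⟩ : r = 0 ∧ β = 0 := by
      have := Nat.card_eq_zero_of_infinite (α := H)
      omega
    obtain rfl : α = 0 := by omega
    have hempty : (H : Set A) ∩ S = ∅ :=
      (Set.ncard_eq_zero (hfin.inter_of_right _)).1 (by omega)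
    simp [hempty]

/-- Let `A` be an abelian group, `H` a finite subgroup, `S` a finite symmetric
subset with `|S| = r`, `|S \ H| = α`, `|H ∩ S| = r - α`, `|H| = r + β`. Then
the number of ordered pairs `(a,b) ∈ (H∩S)×(H∩S)` with `a+b ∈ S` is at least
`(r-α)² - (α+β)(r+β)` and at most `(r-α)² - (α+β)(r+β) + 2(α+β)²`. -/
theorem stmt13 {A : Type*} [AddCommGroup A] (H : AddSubgroup A) (S : Set A)
    (hfin : S.Finite) (hsym : ∀ a ∈ S, -a ∈ S) (r α β : ℕ)
    (hr : S.ncard = r) (hα : (S \ (H : Set A)).ncard = α)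
    (hcap : (((H : Set A) ∩ S).ncard : ℤ) = (r : ℤ) - (α : ℤ))
    (hH : Nat.card H = r + β) :
    ((r : ℤ) - α) ^ 2 - ((α : ℤ) + β) * ((r : ℤ) + β) ≤
      ({p : A × A | p.1 ∈ (H : Set A) ∩ S ∧ p.2 ∈ (H : Set A) ∩ S ∧
        p.1 + p.2 ∈ S}.ncard : ℤ) ∧
    ({p : A × A | p.1 ∈ (H : Set A) ∩ S ∧ p.2 ∈ (H : Set A) ∩ S ∧
        p.1 + p.2 ∈ S}.ncard : ℤ) ≤
      ((r : ℤ) - α) ^ 2 - ((α : ℤ) + β) * ((r : ℤ) + β) + 2 * ((α : ℤ) + β) ^ 2 :=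
  stmt13_general H S hfin r α β hcap hH
end

section
/- Let G be a graph, v a vertex of G with neighborhood N[v] = N(v) ∪ {v}, R(v) the set of vertices in N[v] all of whose neighbors lie in N[v], and suppose G is r-regular with every open neighborhood inducing exactly binom(r,2) - k edges, where k ≥ 1. Then |R(v)| ≥ r + 1 - 2k. -/
/-!
Every vertex `w ∈ N(v)` adjacent to all other vertices of `N(v)` already has its `r` neighbours
`v` and `N(v) \ {w}` inside `N[v]`, so it lies in `R(v)`, as does `v` itself. Hence every vertex
of `N[v]` outside `R(v)` is an endpoint of a non-edge of `N(v)`. Counting ordered pairs, the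
hypothesis says that `N(v)` spans exactly `2k` ordered non-adjacent pairs of distinct vertices, so
at most `2k` vertices are missing from `R(v)`.
-/

open Finset

namespace SimpleGraph

variable {V : Type*} (G : SimpleGraph V) [DecidableRel G.Adj]

lemma filter_adj_adj_adj_eq_offDiag [Fintype V] (v : V) :
    (univ.filter fun p : V × V => G.Adj v p.1 ∧ G.Adj v p.2 ∧ G.Adj p.1 p.2) =
      (G.neighborFinset v).offDiag.filter fun p => G.Adj p.1 p.2 := by
  ext ⟨a, b⟩
  simp only [mem_filter, mem_univ, true_and, mem_offDiag, mem_neighborFinset]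
  exact ⟨fun ⟨ha, hb, hab⟩ => ⟨⟨ha, hb, hab.ne⟩, hab⟩,
    fun ⟨⟨ha, hb, _⟩, hab⟩ => ⟨ha, hb, hab⟩⟩

lemma card_offDiag_filter_not_adj_add (s : Finset V) :
    (s.offDiag.filter fun p => ¬ G.Adj p.1 p.2).card +
      (s.offDiag.filter fun p => G.Adj p.1 p.2).card = s.card * s.card - s.card := by
  rw [add_comm, card_filter_add_card_filter_not, offDiag_card]

lemma card_filter_exists_not_adj_le [DecidableEq V] (s : Finset V) :
    (s.filter fun w => ∃ u ∈ s, u ≠ w ∧ ¬ G.Adj u w).card ≤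
      (s.offDiag.filter fun p => ¬ G.Adj p.1 p.2).card := by
  refine (card_le_card ?_).trans (card_image_le (f := Prod.snd))
  intro w hw
  obtain ⟨hws, u, hus, hne, hnadj⟩ := mem_filter.mp hw
  exact mem_image.mpr ⟨(u, w), mem_filter.mpr ⟨mem_offDiag.mpr ⟨hus, hws, hne⟩, hnadj⟩, rfl⟩

lemma neighborFinset_eq_insert_erase [Fintype V] [DecidableEq V] {v w : V} (hvw : G.Adj v w)
    (hdeg : G.degree w = G.degree v)
    (hall : ∀ u ∈ G.neighborFinset v, u ≠ w → G.Adj u w) :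
    G.neighborFinset w = insert v ((G.neighborFinset v).erase w) := by
  have hsub : insert v ((G.neighborFinset v).erase w) ⊆ G.neighborFinset w := by
    intro u hu
    rw [mem_neighborFinset]
    rcases mem_insert.mp hu with rfl | hu
    · exact hvw.symm
    · exact (hall u (mem_of_mem_erase hu) (ne_of_mem_erase hu)).symm
  refine (eq_of_subset_of_card_le hsub ?_).symm
  have hv : v ∉ (G.neighborFinset v).erase w := fun h => by simpa using mem_of_mem_erase h
  rw [card_insert_of_notMem hv, card_erase_of_mem (by simpa using hvw),
    card_neighborFinset_eq_degree, card_neighborFinset_eq_degree, hdeg]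
  have : 0 < G.degree v := G.degree_pos_iff_exists_adj v |>.mpr ⟨w, hvw⟩
  omega

lemma degree_add_one_le_card_filter_add [Fintype V] [DecidableEq V] {v : V}
    (hdeg : ∀ w ∈ G.neighborFinset v, G.degree w = G.degree v) :
    G.degree v + 1 ≤
      ((insert v (G.neighborFinset v)).filter fun w =>
          ∀ u, G.Adj w u → u ∈ insert v (G.neighborFinset v)).card +
        ((G.neighborFinset v).offDiag.filter fun p => ¬ G.Adj p.1 p.2).card := by
  set N := G.neighborFinset v
  set B := N.filter fun w => ∃ u ∈ N, u ≠ w ∧ ¬ G.Adj u w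
  have hvN : v ∉ N := by simp [N]
  have hsub : insert v N \ B ⊆
      (insert v N).filter fun w => ∀ u, G.Adj w u → u ∈ insert v N := by
    intro w hw
    obtain ⟨hwN', hwB⟩ := mem_sdiff.mp hw
    refine mem_filter.mpr ⟨hwN', fun u hwu => ?_⟩
    rcases mem_insert.mp hwN' with rfl | hwN
    · exact mem_insert_of_mem (by simpa [N] using hwu)
    · have hall : ∀ u ∈ N, u ≠ w → G.Adj u w := fun u hu hne => by
        by_contra h
        exact hwB (mem_filter.mpr ⟨hwN, u, hu, hne, h⟩)
      have hu : u ∈ G.neighborFinset w := by simpa using hwu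
      rw [G.neighborFinset_eq_insert_erase (by simpa [N] using hwN) (hdeg w hwN) hall] at hu
      exact insert_subset_insert v (erase_subset w N) hu
  have hcard : (insert v N \ B).card + B.card = G.degree v + 1 := by
    rw [card_sdiff_add_card_eq_card ((filter_subset _ N).trans (subset_insert v N)),
      card_insert_of_notMem hvN, card_neighborFinset_eq_degree]
  have hB : B.card ≤ (N.offDiag.filter fun p => ¬ G.Adj p.1 p.2).card :=
    G.card_filter_exists_not_adj_le N
  have := card_le_card hsub
  omega

end SimpleGraph

lemma two_mul_choose_two (n : ℕ) : 2 * n.choose 2 = n * n - n := by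
  rw [Nat.choose_two_right, Nat.mul_div_cancel' n.even_mul_pred_self.two_dvd, Nat.mul_sub_one]

theorem stmt15_general {V : Type*} [Fintype V] [DecidableEq V]
    (G : SimpleGraph V) [DecidableRel G.Adj] (r k : ℕ)
    (hreg : ∀ v, G.degree v = r)
    (hc : ∀ v, (Finset.univ.filter fun p : V × V =>
        G.Adj v p.1 ∧ G.Adj v p.2 ∧ G.Adj p.1 p.2).card + 2 * k = 2 * r.choose 2)
    (v : V) :
    (r : ℤ) + 1 - 2 * (k : ℤ) ≤
      (((insert v (G.neighborFinset v)).filter fun w =>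
          ∀ u, G.Adj w u → u ∈ insert v (G.neighborFinset v)).card : ℤ) := by
  have hnonadj : ((G.neighborFinset v).offDiag.filter fun p => ¬ G.Adj p.1 p.2).card = 2 * k := by
    have hsplit := G.card_offDiag_filter_not_adj_add (G.neighborFinset v)
    have hadj := hc v
    rw [G.filter_adj_adj_adj_eq_offDiag, two_mul_choose_two] at hadj
    rw [G.card_neighborFinset_eq_degree, hreg] at hsplit
    omega
  have := G.degree_add_one_le_card_filter_add fun w _ => (hreg w).trans (hreg v).symm
  rw [hnonadj, hreg] at this
  omega

/-- Let `G` be `r`-regular with every open neighborhood inducing exactly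
`binom(r,2) - k` edges (`k ≥ 1`), let `v` be a vertex with closed neighborhood
`N[v]`, and let `R(v)` be the set of vertices of `N[v]` all of whose neighbors
lie in `N[v]`. Then `|R(v)| ≥ r + 1 - 2k`. -/
theorem stmt15 {V : Type*} [Fintype V] [DecidableEq V]
    (G : SimpleGraph V) [DecidableRel G.Adj] (r k : ℕ) (hk : 1 ≤ k)
    (hreg : ∀ v, G.degree v = r)
    (hc : ∀ v, (Finset.univ.filter fun p : V × V =>
        G.Adj v p.1 ∧ G.Adj v p.2 ∧ G.Adj p.1 p.2).card + 2 * k = 2 * r.choose 2)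
    (v : V) :
    (r : ℤ) + 1 - 2 * (k : ℤ) ≤
      (((insert v (G.neighborFinset v)).filter fun w =>
          ∀ u, G.Adj w u → u ∈ insert v (G.neighborFinset v)).card : ℤ) :=
  stmt15_general G r k hreg hc v
end
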